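/- arXiv:1601.00302 — 3 statements merged into one kernel-verified Lean document; each statement's English description precedes it below -/
import Mathlib

section
/- Let p : N → Q and q : L → Q be lattice homomorphisms, σ ⊂ N_ℝ, λ ⊂ L_ℝ, κ ⊂ Q_ℝ rational polyhedral cones with p(σ) ⊆ κ and q(λ) ⊆ κ. Then σ ×_κ λ = {(v, w) ∈ σ × λ : p(v) = q(w)} is a (not necessarily strictly convex) rational polyhedral cone in (N ×_Q L)_ℝ, and if σ, λ are strictly convex so is σ ×_κ λ. -/
noncomputable section

/-- Cast an integer vector to a real vector. -/
def icast {n : ℕ} (v : Fin n → ℤ) : Fin n → ℝ := fun i => (v i : ℝ)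

/-- The rational polyhedral cone generated by a finite set of lattice vectors. -/
def ratCone {n : ℕ} (s : Finset (Fin n → ℤ)) : Set (Fin n → ℝ) :=
  {x | ∃ c : (Fin n → ℤ) → ℝ, (∀ v, 0 ≤ c v) ∧ x = ∑ v ∈ s, c v • icast v}

/-- `σ` is a rational polyhedral cone. -/
def IsRatCone {n : ℕ} (σ : Set (Fin n → ℝ)) : Prop := ∃ s, σ = ratCone s

/-- The real-linear map attached to an integer matrix `A` (the map `p_ℝ`). -/
def mulVecR {m n : ℕ} (A : Matrix (Fin m) (Fin n) ℤ) (x : Fin n → ℝ) : Fin m → ℝ :=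
  fun j => ∑ i, (A j i : ℝ) * x i

/-- The lattice points `N ∩ σ` of a cone `σ ⊆ N_ℝ`. -/
def latticePts {n : ℕ} (σ : Set (Fin n → ℝ)) : Set (Fin n → ℤ) := {v | icast v ∈ σ}

/-- The dual monoid `N^∨_σ = σ^∨ ∩ N^∨`: integral functionals nonnegative on `σ`. -/
def dualMonoid {n : ℕ} (σ : Set (Fin n → ℝ)) : Set (Fin n → ℤ) :=
  {u | ∀ x ∈ σ, 0 ≤ ∑ i, (u i : ℝ) * x i}

/-- The dual (transpose) map `Q^∨ → N^∨`, `u ↦ u ∘ p`, induced by the matrix `A`. -/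
def dualMap {m n : ℕ} (A : Matrix (Fin m) (Fin n) ℤ) (u : Fin m → ℤ) : Fin n → ℤ :=
  fun i => ∑ j, u j * A j i

/-- `τ` is a face of `σ`: the zero locus on `σ` of a functional nonnegative on `σ`. -/
def IsFaceOf {n : ℕ} (τ σ : Set (Fin n → ℝ)) : Prop :=
  ∃ u : Fin n → ℝ, (∀ x ∈ σ, 0 ≤ ∑ i, u i * x i) ∧ τ = {x ∈ σ | ∑ i, u i * x i = 0}

/-- A cone is strictly convex (sharp) if it contains no line. -/
def IsSharp {n : ℕ} (σ : Set (Fin n → ℝ)) : Prop := ∀ x ∈ σ, -x ∈ σ → x = 0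

/-- A fan: a finite, face-closed collection of strictly convex rational polyhedral
cones, any two of which intersect in a common face. -/
def IsFan {n : ℕ} (F : Set (Set (Fin n → ℝ))) : Prop :=
  F.Finite ∧ (∀ σ ∈ F, IsRatCone σ ∧ IsSharp σ) ∧
  (∀ σ ∈ F, ∀ τ, IsFaceOf τ σ → τ ∈ F) ∧
  (∀ σ ∈ F, ∀ σ' ∈ F, IsFaceOf (σ ∩ σ') σ)

section ConeAux

variable {E V : Type*} [AddCommGroup V] [Module ℝ V]

def coneOf (ι : E → V) (s : Finset E) : Set V :=
  {x | ∃ c : E → ℝ, (∀ v, 0 ≤ c v) ∧ x = ∑ v ∈ s, c v • ι v}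

def IsConic (C : Set V) : Prop :=
  (0 : V) ∈ C ∧ (∀ x ∈ C, ∀ y ∈ C, x + y ∈ C) ∧
    ∀ (r : ℝ), 0 ≤ r → ∀ x ∈ C, r • x ∈ C

lemma coneOf_isConic (ι : E → V) (s : Finset E) : IsConic (coneOf ι s) := by
  refine ⟨⟨fun _ => 0, fun _ => le_rfl, by simp⟩, ?_, ?_⟩
  · rintro x ⟨c, hc, rfl⟩ y ⟨d, hd, rfl⟩
    exact ⟨c + d, fun v => add_nonneg (hc v) (hd v), by
      rw [← Finset.sum_add_distrib]; simp [add_smul]⟩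
  · rintro r hr x ⟨c, hc, rfl⟩
    exact ⟨fun v => r * c v, fun v => mul_nonneg hr (hc v), by
      rw [Finset.smul_sum]; simp [smul_smul]⟩

lemma mem_coneOf {ι : E → V} {s : Finset E} {e : E} (he : e ∈ s) :
    ι e ∈ coneOf ι s := by
  classical
  refine ⟨fun v => if v = e then 1 else 0, fun v => by positivity, ?_⟩
  simp only [ite_smul, one_smul, zero_smul]
  rw [Finset.sum_ite_eq' s e (fun v => ι v), if_pos he]

lemma sum_mem_isConic {C : Set V} (hC : IsConic C) {α : Type*} (u : Finset α)
    (d : α → ℝ) (g : α → V) (hd : ∀ i ∈ u, 0 ≤ d i) (hg : ∀ i ∈ u, g i ∈ C) :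
    ∑ i ∈ u, d i • g i ∈ C := by
  classical
  induction u using Finset.induction_on with
  | empty => simpa using hC.1
  | @insert _ _ hnot ih =>
    rw [Finset.sum_insert hnot]
    exact hC.2.1 _ (hC.2.2 _ (hd _ (Finset.mem_insert_self _ _)) _
        (hg _ (Finset.mem_insert_self _ _))) _
      (ih (fun i hi => hd i (Finset.mem_insert_of_mem hi))
        (fun i hi => hg i (Finset.mem_insert_of_mem hi)))

lemma coneOf_subset {ι : E → V} {s : Finset E} {C : Set V} (hC : IsConic C)
    (h : ∀ e ∈ s, ι e ∈ C) : coneOf ι s ⊆ C := by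
  rintro x ⟨c, hc, rfl⟩
  exact sum_mem_isConic hC s c ι (fun i _ => hc i) h

lemma isConic_ker (F : V →ₗ[ℝ] ℝ) : IsConic {x | F x = 0} := by
  refine ⟨by simp, ?_, ?_⟩
  · intro x hx y hy; simp only [Set.mem_setOf_eq] at *; simp [map_add, hx, hy]
  · intro r _ x hx; simp only [Set.mem_setOf_eq] at *; simp [map_smul, hx]

lemma isConic_inter {C D : Set V} (hC : IsConic C) (hD : IsConic D) :
    IsConic (C ∩ D) :=
  ⟨⟨hC.1, hD.1⟩, fun x hx y hy => ⟨hC.2.1 _ hx.1 _ hy.1, hD.2.1 _ hx.2 _ hy.2⟩,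
    fun r hr x hx => ⟨hC.2.2 r hr _ hx.1, hD.2.2 r hr _ hx.2⟩⟩

variable [AddCommGroup E]

lemma trisum [DecidableEq E] {M : Type*} [AddCommMonoid M] (s : Finset E)
    (f : E → ℤ) (g : E → M) :
    ∑ v ∈ s, g v = ∑ v ∈ s.filter (fun v => f v = 0), g v +
      (∑ v ∈ s.filter (fun v => 0 < f v), g v +
       ∑ v ∈ s.filter (fun v => f v < 0), g v) := by
  rw [← Finset.sum_filter_add_sum_filter_not s (fun v => f v = 0) g]
  congr 1
  rw [← Finset.sum_filter_add_sum_filter_not (s.filter fun v => ¬ f v = 0)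
    (fun v => 0 < f v) g, Finset.filter_filter, Finset.filter_filter]
  congr 1
  · exact Finset.sum_congr (Finset.filter_congr (fun v _ => by omega)) (fun _ _ => rfl)
  · exact Finset.sum_congr (Finset.filter_congr (fun v _ => by omega)) (fun _ _ => rfl)

lemma sliceCone [DecidableEq E] (ι : E →+ V) (F : V →ₗ[ℝ] ℝ) (f : E → ℤ)
    (hcompat : ∀ e, F (ι e) = (f e : ℝ)) (s : Finset E) :
    ∃ t : Finset E, coneOf (⇑ι) t = coneOf (⇑ι) s ∩ {x | F x = 0} := by
  set t : Finset E := s.filter (fun e => f e = 0) ∪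
    ((s ×ˢ s).filter (fun p => 0 < f p.1 ∧ f p.2 < 0)).image
      (fun p => (-(f p.2)) • p.1 + (f p.1) • p.2) with ht
  have hιz : ∀ (z : ℤ) (a : E), ι (z • a) = ((z : ℝ)) • ι a := by
    intro z a; rw [map_zsmul, ← Int.cast_smul_eq_zsmul ℝ]
  refine ⟨t, Set.Subset.antisymm ?_ ?_⟩
  · apply coneOf_subset (isConic_inter (coneOf_isConic _ _) (isConic_ker F))
    intro e he
    rw [ht, Finset.mem_union] at he
    rcases he with he | he
    · rw [Finset.mem_filter] at he
      refine ⟨mem_coneOf he.1, ?_⟩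
      simp only [Set.mem_setOf_eq, hcompat, he.2, Int.cast_zero]
    · rw [Finset.mem_image] at he
      obtain ⟨p, hp, rfl⟩ := he
      rw [Finset.mem_filter, Finset.mem_product] at hp
      obtain ⟨⟨hp1, hp2⟩, hf1, hf2⟩ := hp
      have hexp : ι ((-(f p.2)) • p.1 + (f p.1) • p.2) =
          ((-(f p.2) : ℤ) : ℝ) • ι p.1 + ((f p.1 : ℤ) : ℝ) • ι p.2 := by
        rw [map_add, hιz, hιz]
      constructor
      · rw [hexp]
        have hC := coneOf_isConic (⇑ι) s
        exact hC.2.1 _ (hC.2.2 _ (by exact_mod_cast (by omega : (0:ℤ) ≤ -f p.2)) _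
            (mem_coneOf hp1)) _
          (hC.2.2 _ (by exact_mod_cast (by omega : (0:ℤ) ≤ f p.1)) _ (mem_coneOf hp2))
      · simp only [Set.mem_setOf_eq, hexp, map_add, map_smul, hcompat,
          smul_eq_mul]
        push_cast
        ring
  · rintro x ⟨⟨c, hc, rfl⟩, hFx⟩
    simp only [Set.mem_setOf_eq] at hFx
    set P := s.filter (fun v => 0 < f v) with hP
    set N := s.filter (fun v => f v < 0) with hN
    set Z := s.filter (fun v => f v = 0) with hZ
    have hFsum : ∑ v ∈ s, c v * (f v : ℝ) = 0 := by
      rw [map_sum] at hFx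
      simpa [map_smul, hcompat, smul_eq_mul] using hFx
    set S : ℝ := ∑ v ∈ P, c v * (f v : ℝ) with hSdef
    have hZ0 : ∑ v ∈ Z, c v * (f v : ℝ) = 0 :=
      Finset.sum_eq_zero (fun v hv => by
        rw [hZ, Finset.mem_filter] at hv; simp [hv.2])
    have hNsum : ∑ v ∈ N, c v * (-(f v) : ℝ) = S := by
      have := trisum s f (fun v => c v * (f v : ℝ))
      rw [hFsum, hZ0, ← hSdef] at this
      have h2 : ∑ v ∈ N, c v * ((f v : ℝ)) = -S := by linarith
      calc ∑ v ∈ N, c v * (-(f v) : ℝ) = -∑ v ∈ N, c v * ((f v : ℝ)) := by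
            rw [← Finset.sum_neg_distrib]
            exact Finset.sum_congr rfl (fun v _ => by push_cast; ring)
        _ = S := by rw [h2, neg_neg]
    have hSnn : 0 ≤ S := Finset.sum_nonneg (fun v hv => by
      rw [hP, Finset.mem_filter] at hv
      have : (0 : ℝ) ≤ (f v : ℝ) := by exact_mod_cast hv.2.le
      exact mul_nonneg (hc v) this)
    have hxsplit := trisum s f (fun v => c v • ι v)
    rcases eq_or_lt_of_le hSnn with hS0 | hSpos
    · -- S = 0 : positive and negative parts vanish
      have hPzero : ∀ v ∈ P, c v • ι v = 0 := by
        intro v hv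
        have hterm := (Finset.sum_eq_zero_iff_of_nonneg (fun w hw => by
          rw [hP, Finset.mem_filter] at hw
          have : (0 : ℝ) ≤ (f w : ℝ) := by exact_mod_cast hw.2.le
          exact mul_nonneg (hc w) this)).mp hS0.symm v hv
        rw [hP, Finset.mem_filter] at hv
        have hfv : (f v : ℝ) ≠ 0 := by exact_mod_cast hv.2.ne'
        have : c v = 0 := by
          rcases mul_eq_zero.mp hterm with h | h
          · exact h
          · exact absurd h hfv
        simp [this]
      have hNzero : ∀ v ∈ N, c v • ι v = 0 := by
        intro v hv
        have hterm := (Finset.sum_eq_zero_iff_of_nonneg (fun w hw => by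
          rw [hN, Finset.mem_filter] at hw
          have : (0 : ℝ) ≤ (-(f w) : ℝ) := by
            exact_mod_cast (by omega : (0:ℤ) ≤ -f w)
          exact mul_nonneg (hc w) this)).mp (by rw [hNsum, ← hS0]) v hv
        rw [hN, Finset.mem_filter] at hv
        have hfv : (-(f v) : ℝ) ≠ 0 := by
          have : f v ≠ 0 := hv.2.ne
          push_cast
          exact_mod_cast neg_ne_zero.mpr (by exact_mod_cast this)
        have : c v = 0 := by
          rcases mul_eq_zero.mp hterm with h | h
          · exact h
          · exact absurd h hfv
        simp [this]
      have hx : ∑ v ∈ s, c v • ι v = ∑ v ∈ Z, c v • ι v := by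
        rw [hxsplit, Finset.sum_eq_zero hPzero, Finset.sum_eq_zero hNzero]
        simp [hZ]
      rw [hx]
      apply sum_mem_isConic (coneOf_isConic _ _) Z c (⇑ι) (fun i _ => hc i)
      intro v hv
      apply mem_coneOf
      rw [ht, Finset.mem_union]
      exact Or.inl hv
    · -- S > 0 : double description step
      have key : ∑ v ∈ P, c v • ι v + ∑ w ∈ N, c w • ι w =
          ∑ p ∈ P ×ˢ N, ((c p.1 * c p.2) / S) •
            ι ((-(f p.2)) • p.1 + (f p.1) • p.2) := by
        have step1 : ∀ p : E × E, ((c p.1 * c p.2) / S) •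
            ι ((-(f p.2)) • p.1 + (f p.1) • p.2) =
            ((c p.1 * c p.2) / S * (-(f p.2) : ℝ)) • ι p.1 +
            ((c p.1 * c p.2) / S * ((f p.1) : ℝ)) • ι p.2 := by
          intro p
          rw [map_add, hιz, hιz, smul_add, smul_smul, smul_smul]
          push_cast
          ring_nf
        rw [Finset.sum_congr rfl (fun p _ => step1 p), Finset.sum_add_distrib]
        congr 1
        · rw [Finset.sum_product]
          refine Finset.sum_congr rfl (fun a ha => ?_)
          show c a • ι a = ∑ y ∈ N, (c a * c y / S * (-(f y : ℝ))) • ι a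
          rw [← Finset.sum_smul]
          congr 1
          have heq : ∑ y ∈ N, c a * c y / S * (-(f y : ℝ)) =
              (c a / S) * ∑ y ∈ N, c y * (-(f y) : ℝ) := by
            rw [Finset.mul_sum]
            exact Finset.sum_congr rfl (fun b _ => by push_cast; ring)
          rw [heq, hNsum, div_mul_eq_mul_div, mul_div_assoc,
            div_self hSpos.ne', mul_one]
        · rw [Finset.sum_product, Finset.sum_comm]
          refine Finset.sum_congr rfl (fun b hb => ?_)
          show c b • ι b = ∑ x ∈ P, (c x * c b / S * ((f x : ℤ) : ℝ)) • ι b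
          rw [← Finset.sum_smul]
          congr 1
          have heq : ∑ x ∈ P, c x * c b / S * ((f x : ℤ) : ℝ) =
              (c b / S) * ∑ x ∈ P, c x * ((f x) : ℝ) := by
            rw [Finset.mul_sum]
            exact Finset.sum_congr rfl (fun a _ => by ring)
          rw [heq, ← hSdef, div_mul_eq_mul_div, mul_div_assoc,
            div_self hSpos.ne', mul_one]
      rw [hxsplit, key]
      have hC := coneOf_isConic (⇑ι) t
      apply hC.2.1
      · apply sum_mem_isConic hC Z c (⇑ι) (fun i _ => hc i)
        intro v hv
        apply mem_coneOf
        rw [ht, Finset.mem_union]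
        exact Or.inl hv
      · apply sum_mem_isConic hC _ _ _
        · intro p hp
          exact div_nonneg (mul_nonneg (hc p.1) (hc p.2)) hSnn
        · intro p hp
          rw [Finset.mem_product] at hp
          apply mem_coneOf
          rw [ht, Finset.mem_union]
          right
          rw [Finset.mem_image]
          refine ⟨p, ?_, rfl⟩
          rw [Finset.mem_filter, Finset.mem_product]
          rw [hP, Finset.mem_filter] at hp
          rw [hN, Finset.mem_filter] at hp
          exact ⟨⟨hp.1.1, hp.2.1⟩, hp.1.2, hp.2.2⟩

lemma multi_slice [DecidableEq E] (ι : E →+ V) {κ : Type*} [DecidableEq κ]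
    (F : κ → V →ₗ[ℝ] ℝ) (f : κ → E → ℤ)
    (hcompat : ∀ k e, F k (ι e) = (f k e : ℝ)) (K : Finset κ) (s : Finset E) :
    ∃ t : Finset E, coneOf (⇑ι) t = coneOf (⇑ι) s ∩ {x | ∀ k ∈ K, F k x = 0} := by
  induction K using Finset.induction_on with
  | empty => exact ⟨s, by simp⟩
  | @insert k K hk ih =>
    obtain ⟨t, htt⟩ := ih
    obtain ⟨u, hu⟩ := sliceCone ι (F k) (f k) (hcompat k) t
    refine ⟨u, ?_⟩
    rw [hu, htt]
    ext x
    simp only [Set.mem_inter_iff, Set.mem_setOf_eq, Finset.mem_insert]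
    constructor
    · rintro ⟨⟨h1, h2⟩, h3⟩
      exact ⟨h1, fun j hj => by rcases hj with rfl | hj; exacts [h3, h2 j hj]⟩
    · rintro ⟨h1, h2⟩
      exact ⟨⟨h1, fun j hj => h2 j (Or.inr hj)⟩, h2 k (Or.inl rfl)⟩

end ConeAux


section FiberAux

lemma icast_add {n : ℕ} (a b : Fin n → ℤ) : icast (a + b) = icast a + icast b := by
  funext i; simp [icast]

lemma icast_zero {n : ℕ} : icast (0 : Fin n → ℤ) = 0 := by
  funext i; simp [icast]

/-- The embedding of the product lattice into the product real space. -/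
def pairCast {n l : ℕ} :
    ((Fin n → ℤ) × (Fin l → ℤ)) →+ ((Fin n → ℝ) × (Fin l → ℝ)) where
  toFun e := (icast e.1, icast e.2)
  map_zero' := by simp [icast_zero, Prod.ext_iff]
  map_add' a b := by simp [icast_add, Prod.ext_iff]

@[simp] lemma pairCast_apply {n l : ℕ} (e : (Fin n → ℤ) × (Fin l → ℤ)) :
    pairCast e = (icast e.1, icast e.2) := rfl

/-- The linear functional `z ↦ (A z₁ - B z₂) k` on the product space. -/
def FAB {m n l : ℕ} (A : Matrix (Fin m) (Fin n) ℤ) (B : Matrix (Fin m) (Fin l) ℤ)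
    (k : Fin m) : ((Fin n → ℝ) × (Fin l → ℝ)) →ₗ[ℝ] ℝ where
  toFun z := mulVecR A z.1 k - mulVecR B z.2 k
  map_add' z w := by
    simp only [mulVecR, Prod.fst_add, Prod.snd_add, Pi.add_apply, mul_add,
      Finset.sum_add_distrib]
    ring
  map_smul' r z := by
    simp only [mulVecR, Prod.smul_fst, Prod.smul_snd, Pi.smul_apply,
      smul_eq_mul, RingHom.id_apply]
    rw [mul_sub, Finset.mul_sum, Finset.mul_sum]
    congr 1 <;> exact Finset.sum_congr rfl (fun i _ => by ring)

lemma FAB_compat {m n l : ℕ} (A : Matrix (Fin m) (Fin n) ℤ)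
    (B : Matrix (Fin m) (Fin l) ℤ) (k : Fin m)
    (e : (Fin n → ℤ) × (Fin l → ℤ)) :
    FAB A B k (pairCast e) =
      ((Matrix.mulVec A e.1 k - Matrix.mulVec B e.2 k : ℤ) : ℝ) := by
  simp only [FAB, pairCast_apply, LinearMap.coe_mk, AddHom.coe_mk, mulVecR,
    Matrix.mulVec, dotProduct, icast]
  push_cast
  ring

@[simp] lemma FAB_apply {m n l : ℕ} (A : Matrix (Fin m) (Fin n) ℤ)
    (B : Matrix (Fin m) (Fin l) ℤ) (k : Fin m) (z : (Fin n → ℝ) × (Fin l → ℝ)) :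
    FAB A B k z = mulVecR A z.1 k - mulVecR B z.2 k := rfl

lemma ratCone_isConic {n : ℕ} (s : Finset (Fin n → ℤ)) : IsConic (ratCone s) :=
  coneOf_isConic icast s

end FiberAux


/-- Let `p : N → Q` and `q : L → Q` be lattice homomorphisms
(matrices `A`, `B`), and `σ ⊆ N_ℝ`, `λ ⊆ L_ℝ`, `κ ⊆ Q_ℝ` rational polyhedral
cones with `p(σ) ⊆ κ` and `q(λ) ⊆ κ`.  Then the fiber product
`σ ×_κ λ = {(v, w) ∈ σ × λ : p v = q w}` is a rational polyhedral cone in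
`(N ×_Q L)_ℝ` — generated by finitely many lattice points of the fiber product
lattice — and if `σ` and `λ` are strictly convex, so is `σ ×_κ λ`. -/
theorem fiber_product_cone {m n l : ℕ}
    (A : Matrix (Fin m) (Fin n) ℤ) (B : Matrix (Fin m) (Fin l) ℤ)
    (σ : Set (Fin n → ℝ)) (lam : Set (Fin l → ℝ)) (κ : Set (Fin m → ℝ))
    (hσ : IsRatCone σ) (hlam : IsRatCone lam) (hκ : IsRatCone κ)
    (hpσ : ∀ x ∈ σ, mulVecR A x ∈ κ) (hqlam : ∀ y ∈ lam, mulVecR B y ∈ κ) :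
    (∃ s : Finset ((Fin n → ℤ) × (Fin l → ℤ)),
      (∀ v ∈ s, Matrix.mulVec A v.1 = Matrix.mulVec B v.2) ∧
      {z : (Fin n → ℝ) × (Fin l → ℝ) |
          z.1 ∈ σ ∧ z.2 ∈ lam ∧ mulVecR A z.1 = mulVecR B z.2} =
        {z | ∃ c : ((Fin n → ℤ) × (Fin l → ℤ)) → ℝ, (∀ v, 0 ≤ c v) ∧
          z = ∑ v ∈ s, c v • (icast v.1, icast v.2)}) ∧
    (IsSharp σ → IsSharp lam →
      ∀ z ∈ {z : (Fin n → ℝ) × (Fin l → ℝ) |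
          z.1 ∈ σ ∧ z.2 ∈ lam ∧ mulVecR A z.1 = mulVecR B z.2},
        -z ∈ {z : (Fin n → ℝ) × (Fin l → ℝ) |
          z.1 ∈ σ ∧ z.2 ∈ lam ∧ mulVecR A z.1 = mulVecR B z.2} → z = 0) := by
  classical
  constructor
  · -- finite generation
    obtain ⟨sσ, rfl⟩ := hσ
    obtain ⟨sl, rfl⟩ := hlam
    set s₀ : Finset ((Fin n → ℤ) × (Fin l → ℤ)) :=
      sσ.image (fun v => (v, (0 : Fin l → ℤ))) ∪
      sl.image (fun w => ((0 : Fin n → ℤ), w)) with hs₀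
    have hprodConic : IsConic {z : (Fin n → ℝ) × (Fin l → ℝ) |
        z.1 ∈ ratCone sσ ∧ z.2 ∈ ratCone sl} := by
      have h1 := ratCone_isConic sσ
      have h2 := ratCone_isConic sl
      refine ⟨⟨h1.1, h2.1⟩, ?_, ?_⟩
      · rintro x ⟨hx1, hx2⟩ y ⟨hy1, hy2⟩
        exact ⟨h1.2.1 _ hx1 _ hy1, h2.2.1 _ hx2 _ hy2⟩
      · rintro r hr x ⟨hx1, hx2⟩
        exact ⟨h1.2.2 r hr _ hx1, h2.2.2 r hr _ hx2⟩
    have hprod : coneOf (⇑(pairCast (n := n) (l := l))) s₀ =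
        {z : (Fin n → ℝ) × (Fin l → ℝ) | z.1 ∈ ratCone sσ ∧ z.2 ∈ ratCone sl} := by
      apply Set.Subset.antisymm
      · apply coneOf_subset hprodConic
        intro e he
        rw [hs₀, Finset.mem_union, Finset.mem_image, Finset.mem_image] at he
        rcases he with ⟨v, hv, rfl⟩ | ⟨w, hw, rfl⟩
        · exact ⟨mem_coneOf hv, by
            simp only [pairCast_apply, icast_zero]
            exact (ratCone_isConic sl).1⟩
        · exact ⟨by
            simp only [pairCast_apply, icast_zero]
            exact (ratCone_isConic sσ).1, mem_coneOf hw⟩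
      · rintro ⟨x, y⟩ ⟨⟨c, hc, hx⟩, ⟨d, hd, hy⟩⟩
        have hC := coneOf_isConic (⇑(pairCast (n := n) (l := l))) s₀
        have hxy : (x, y) = (∑ v ∈ sσ, c v • (pairCast (v, (0 : Fin l → ℤ)))) +
            (∑ w ∈ sl, d w • (pairCast ((0 : Fin n → ℤ), w))) := by
          have hx' : x = ∑ v ∈ sσ, c v • icast v := hx
          have hy' : y = ∑ v ∈ sl, d v • icast v := hy
          rw [Prod.ext_iff]
          constructor <;>
            simp [Prod.fst_sum, Prod.snd_sum, Prod.fst_add, Prod.snd_add,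
              Prod.smul_fst, Prod.smul_snd, hx', hy', icast_zero, smul_zero,
              Finset.sum_const_zero, pairCast_apply]
        rw [hxy]
        apply hC.2.1
        · apply sum_mem_isConic hC _ _ _ (fun v _ => hc v)
          intro v hv
          exact mem_coneOf (Finset.mem_union_left _ (Finset.mem_image_of_mem _ hv))
        · apply sum_mem_isConic hC _ _ _ (fun w _ => hd w)
          intro w hw
          exact mem_coneOf (Finset.mem_union_right _ (Finset.mem_image_of_mem _ hw))
    obtain ⟨u, hu⟩ := multi_slice (pairCast (n := n) (l := l)) (FAB A B)
      (fun k e => Matrix.mulVec A e.1 k - Matrix.mulVec B e.2 k)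
      (fun k e => FAB_compat A B k e) Finset.univ s₀
    have hFiff : ∀ z : (Fin n → ℝ) × (Fin l → ℝ),
        (∀ k, FAB A B k z = 0) ↔ mulVecR A z.1 = mulVecR B z.2 := by
      intro z
      constructor
      · intro h
        funext k
        exact sub_eq_zero.mp (by simpa using h k)
      · intro h k
        rw [FAB_apply, h, sub_self]
    refine ⟨u, ?_, ?_⟩
    · intro v hv
      have hmem : pairCast v ∈ coneOf (⇑(pairCast (n := n) (l := l))) u :=
        mem_coneOf hv
      rw [hu] at hmem
      funext k
      have hk := hmem.2 k (Finset.mem_univ k)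
      rw [FAB_compat] at hk
      have hz : Matrix.mulVec A v.1 k - Matrix.mulVec B v.2 k = 0 := by
        exact_mod_cast hk
      omega
    · calc {z : (Fin n → ℝ) × (Fin l → ℝ) |
            z.1 ∈ ratCone sσ ∧ z.2 ∈ ratCone sl ∧ mulVecR A z.1 = mulVecR B z.2}
          = coneOf (⇑(pairCast (n := n) (l := l))) s₀ ∩
              {x | ∀ k ∈ Finset.univ, FAB A B k x = 0} := by
            rw [hprod]
            ext z
            simp only [Set.mem_setOf_eq, Set.mem_inter_iff, Finset.mem_univ,
              true_implies]
            rw [← hFiff z]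
            tauto
        _ = coneOf (⇑(pairCast (n := n) (l := l))) u := hu.symm
        _ = {z : (Fin n → ℝ) × (Fin l → ℝ) |
              ∃ c : ((Fin n → ℤ) × (Fin l → ℤ)) → ℝ, (∀ v, 0 ≤ c v) ∧
                z = ∑ v ∈ u, c v • (icast v.1, icast v.2)} := rfl
  · -- sharpness
    rintro h1 h2 z ⟨hz1, hz2, -⟩ ⟨hn1, hn2, -⟩
    have hx : z.1 = 0 := h1 z.1 hz1 (by simpa using hn1)
    have hy : z.2 = 0 := h2 z.2 hz2 (by simpa using hn2)
    exact Prod.ext hx hy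
end
end

section
/- Let p : N → Q be a lattice homomorphism, F a fan in N and G a fan in Q. Then the collection F' := {p_ℝ^{-1}(κ) ∩ σ : κ ∈ G, σ ∈ F} is a fan in N, it refines F (every cone of F' is contained in a cone of F and the supports agree on p_ℝ^{-1}(Supp G) ∩ Supp F), the map p sends every cone of F' into a cone of G, and F' is minimal with these properties: any subdivision F'' of F such that p maps each cone of F'' into a cone of G refines F'. -/
noncomputable section

/-- The minimal modification `F' = {p_ℝ⁻¹(κ) ∩ σ : κ ∈ G, σ ∈ F}`. -/
def minMod {m n : ℕ} (A : Matrix (Fin m) (Fin n) ℤ)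
    (F : Set (Set (Fin n → ℝ))) (G : Set (Set (Fin m → ℝ))) :
    Set (Set (Fin n → ℝ)) :=
  {t | ∃ κ ∈ G, ∃ σ ∈ F, t = (mulVecR A) ⁻¹' κ ∩ σ}


section Dot
variable {ι : Type*} [Fintype ι]

/-- Integer-coefficient linear functional applied to a real vector. -/
def dotZ (u : ι → ℤ) (x : ι → ℝ) : ℝ := ∑ i, (u i : ℝ) * x i

/-- Real dot. -/
def dotR (u x : ι → ℝ) : ℝ := ∑ i, u i * x i

lemma dotZ_smul (u : ι → ℤ) (c : ℝ) (x : ι → ℝ) : dotZ u (c • x) = c * dotZ u x := by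
  simp only [dotZ, Pi.smul_apply, smul_eq_mul, Finset.mul_sum]
  exact Finset.sum_congr rfl fun i _ => by ring

lemma dotZ_sub (u : ι → ℤ) (x y : ι → ℝ) : dotZ u (x - y) = dotZ u x - dotZ u y := by
  simp only [dotZ, Pi.sub_apply, mul_sub, Finset.sum_sub_distrib]

lemma dotZ_finsum {γ : Type*} (u : ι → ℤ) (s : Finset γ) (f : γ → ι → ℝ) :
    dotZ u (∑ v ∈ s, f v) = ∑ v ∈ s, dotZ u (f v) := by
  simp only [dotZ, Finset.sum_apply, Finset.mul_sum]
  exact Finset.sum_comm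

lemma dotZ_comb (c1 c2 : ℤ) (u1 u2 : ι → ℤ) (x : ι → ℝ) :
    dotZ (fun a => c1 * u1 a + c2 * u2 a) x = (c1 : ℝ) * dotZ u1 x + (c2 : ℝ) * dotZ u2 x := by
  simp only [dotZ, Finset.mul_sum]
  rw [← Finset.sum_add_distrib]
  refine Finset.sum_congr rfl fun i _ => ?_
  push_cast
  ring

/-- Solution set of a finite system of integer linear inequalities. -/
def solSet (U : Finset (ι → ℤ)) : Set (ι → ℝ) := {x | ∀ u ∈ U, 0 ≤ dotZ u x}

end Dot

section FM1
variable {α : Type*} [Fintype α] [DecidableEq α]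

/-- partial dot: the `some` part. -/
def sPart (u : Option α → ℤ) (x : α → ℝ) : ℝ := dotZ (fun a => u (some a)) x

lemma dotZ_option (u : Option α → ℤ) (w : Option α → ℝ) :
    dotZ u w = (u none : ℝ) * w none + sPart u (w ∘ some) := by
  simp only [dotZ, sPart, Fintype.sum_option, Function.comp]

/-- Fourier–Motzkin eliminated system. -/
def elimSys (U : Finset (Option α → ℤ)) : Finset (α → ℤ) :=
  ((U.filter (fun u => u none = 0)).image (fun u a => u (some a))) ∪
  (((U.filter (fun u => 0 < u none)) ×ˢ (U.filter (fun u => u none < 0))).image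
    (fun p a => (-(p.2 none)) * p.1 (some a) + p.1 none * p.2 (some a)))

theorem elim_spec (U : Finset (Option α → ℤ)) :
    (fun w : Option α → ℝ => w ∘ some) '' solSet U = solSet (elimSys U) := by
  ext x
  constructor
  · rintro ⟨w, hw, rfl⟩
    intro u' hu'
    rcases Finset.mem_union.1 hu' with h | h
    · rcases Finset.mem_image.1 h with ⟨u, hu, rfl⟩
      rcases Finset.mem_filter.1 hu with ⟨huU, h0⟩
      have := hw u huU
      rw [dotZ_option, h0] at this
      simpa [sPart] using this
    · rcases Finset.mem_image.1 h with ⟨⟨u, v⟩, huv, rfl⟩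
      rcases Finset.mem_product.1 huv with ⟨hu, hv⟩
      rcases Finset.mem_filter.1 hu with ⟨huU, hp⟩
      rcases Finset.mem_filter.1 hv with ⟨hvU, hq⟩
      have hu0 := hw u huU
      have hv0 := hw v hvU
      rw [dotZ_option] at hu0 hv0
      have hpR : (0:ℝ) < (u none : ℤ) := by exact_mod_cast hp
      have hqR : ((v none : ℤ):ℝ) < 0 := by exact_mod_cast hq
      have key : dotZ (fun a => (-(v none)) * u (some a) + u none * v (some a)) (w ∘ some)
          = (-((v none : ℤ)):ℝ) * sPart u (w ∘ some) + ((u none : ℤ) : ℝ) * sPart v (w ∘ some) := by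
        rw [dotZ_comb]; push_cast; rfl
      rw [key]
      nlinarith [mul_nonneg (by linarith : (0:ℝ) ≤ -((v none : ℤ):ℝ)) hu0,
        mul_nonneg hpR.le hv0]
  · intro hx
    classical
    set Up := U.filter (fun u => 0 < u none) with hUp
    set Um := U.filter (fun u => u none < 0) with hUm
    set bnd : (Option α → ℤ) → ℝ := fun u => (- sPart u x) / (u none) with hbnd
    -- membership of derived inequalities
    have hS0 : ∀ u ∈ U, u none = 0 → 0 ≤ sPart u x := by
      intro u hu h0
      have : (fun a => u (some a)) ∈ elimSys U :=
        Finset.mem_union_left _ (Finset.mem_image.2 ⟨u, Finset.mem_filter.2 ⟨hu, h0⟩, rfl⟩)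
      simpa [sPart] using hx _ this
    have hkey : ∀ u ∈ Up, ∀ v ∈ Um, bnd u ≤ bnd v := by
      intro u hu v hv
      have hcomb : (fun a => (-(v none)) * u (some a) + u none * v (some a)) ∈ elimSys U :=
        Finset.mem_union_right _ (Finset.mem_image.2 ⟨(u, v), Finset.mem_product.2 ⟨hu, hv⟩, rfl⟩)
      have h2 := hx _ hcomb
      rw [dotZ_comb] at h2
      have hp : 0 < u none := (Finset.mem_filter.1 hu).2
      have hq : v none < 0 := (Finset.mem_filter.1 hv).2
      have hpR : (0:ℝ) < (u none : ℤ) := by exact_mod_cast hp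
      have hqR : ((v none : ℤ):ℝ) < 0 := by exact_mod_cast hq
      push_cast at h2
      show (- sPart u x) / ((u none : ℤ):ℝ) ≤ (- sPart v x) / ((v none : ℤ):ℝ)
      rw [le_div_iff_of_neg hqR, div_mul_eq_mul_div, le_div_iff₀ hpR]
      simp only [sPart]
      linarith
    -- choose the new coordinate value t
    set t : ℝ := if h : Up.Nonempty then Up.sup' h bnd
      else if h' : Um.Nonempty then Um.inf' h' bnd else 0 with ht
    have hlo : ∀ u ∈ Up, bnd u ≤ t := by
      intro u hu
      rw [ht, dif_pos ⟨u, hu⟩]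
      exact Finset.le_sup' bnd hu
    have hhi : ∀ v ∈ Um, t ≤ bnd v := by
      intro v hv
      rw [ht]
      by_cases h : Up.Nonempty
      · rw [dif_pos h]
        exact Finset.sup'_le h bnd fun u hu => hkey u hu v hv
      · rw [dif_neg h, dif_pos ⟨v, hv⟩]
        exact Finset.inf'_le bnd hv
    refine ⟨fun o => o.elim t x, ?_, by funext a; rfl⟩
    intro u hu
    rw [dotZ_option]
    have hsp : sPart u ((fun o => o.elim t x) ∘ some) = sPart u x := rfl
    rw [hsp, show (none : Option α).elim t x = t from rfl]
    rcases lt_trichotomy (u none) 0 with h | h | h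
    · have hv : u ∈ Um := Finset.mem_filter.2 ⟨hu, h⟩
      have := hhi u hv
      have hqR : ((u none : ℤ):ℝ) < 0 := by exact_mod_cast h
      have h4 : bnd u * ((u none : ℤ):ℝ) = -sPart u x := div_mul_cancel₀ _ hqR.ne
      have h5 : ((u none : ℤ):ℝ) * bnd u ≤ ((u none : ℤ):ℝ) * t :=
        mul_le_mul_of_nonpos_left this hqR.le
      nlinarith
    · rw [h]
      simpa using hS0 u hu h
    · have hv : u ∈ Up := Finset.mem_filter.2 ⟨hu, h⟩
      have := hlo u hv
      have hpR : (0:ℝ) < ((u none : ℤ):ℝ) := by exact_mod_cast h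
      have h4 : bnd u * ((u none : ℤ):ℝ) = -sPart u x := div_mul_cancel₀ _ hpR.ne'
      nlinarith

end FM1

section Poly
variable {α β : Type*} [Fintype α] [Fintype β]

/-- Polyhedral with integer inequalities. -/
def PolyZ {ι : Type*} [Fintype ι] (σ : Set (ι → ℝ)) : Prop := ∃ U : Finset (ι → ℤ), σ = solSet U

lemma dotZ_reindex (E : α ≃ β) (u : α → ℤ) (x : β → ℝ) :
    dotZ (u ∘ E.symm) x = dotZ u (x ∘ E) := by
  simp only [dotZ, Function.comp]
  rw [← Equiv.sum_comp E (fun b => ((u (E.symm b)):ℝ) * x b)]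
  simp

lemma PolyZ.image_reindex (E : α ≃ β) {P : Set (α → ℝ)} (h : PolyZ P) :
    PolyZ ((fun w => w ∘ E.symm) '' P) := by
  classical
  obtain ⟨U, rfl⟩ := h
  refine ⟨U.image (fun u => u ∘ E.symm), ?_⟩
  ext x
  constructor
  · rintro ⟨w, hw, rfl⟩ u' hu'
    rcases Finset.mem_image.1 hu' with ⟨u, hu, rfl⟩
    rw [dotZ_reindex]
    have : (w ∘ E.symm) ∘ E = w := by funext a; simp
    rw [this]
    exact hw u hu
  · intro hx
    refine ⟨x ∘ E, ?_, by funext b; simp⟩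
    intro u hu
    have := hx _ (Finset.mem_image.2 ⟨u, hu, rfl⟩)
    rwa [dotZ_reindex] at this

/-- The equivalence `Option γ ⊕ ι ≃ Option (γ ⊕ ι)`. -/
def optSum (γ ι : Type*) : Option γ ⊕ ι ≃ Option (γ ⊕ ι) where
  toFun := Sum.elim (fun o => o.map Sum.inl) (fun i => some (Sum.inr i))
  invFun := fun o => o.elim (Sum.inl none) (Sum.elim (fun g => Sum.inl (some g)) Sum.inr)
  left_inv := by rintro ((_|g)|i) <;> rfl
  right_inv := by rintro (_|(g|i)) <;> rfl

end Poly

theorem isPoly_restrict_aux {ι : Type} [Fintype ι] [DecidableEq ι] :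
    ∀ (k : ℕ) (κ : Type) (_ : Fintype κ) (_ : DecidableEq κ), Fintype.card κ = k →
      ∀ P : Set (κ ⊕ ι → ℝ), PolyZ P → PolyZ ((fun w => w ∘ Sum.inr) '' P) := by
  intro k
  induction k with
  | zero =>
    intro κ _ _ hcard P hP
    haveI : IsEmpty κ := Fintype.card_eq_zero_iff.1 hcard
    let E : κ ⊕ ι ≃ ι :=
      { toFun := Sum.elim (fun a => isEmptyElim a) id
        invFun := Sum.inr
        left_inv := by rintro (a|i); exacts [isEmptyElim a, rfl]
        right_inv := fun i => rfl }
    exact hP.image_reindex E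
  | succ k ih =>
    intro κ _ _ hcard P hP
    classical
    let e : κ ≃ Option (Fin k) := (Fintype.equivFinOfCardEq hcard).trans (finSuccEquiv k)
    let E : κ ⊕ ι ≃ Option (Fin k ⊕ ι) := (e.sumCongr (Equiv.refl ι)).trans (optSum _ _)
    have h1 : PolyZ ((fun w : (κ ⊕ ι) → ℝ => w ∘ E.symm) '' P) := hP.image_reindex E
    obtain ⟨U1, hU1⟩ := h1
    have h2 : PolyZ ((fun w : Option (Fin k ⊕ ι) → ℝ => w ∘ some) ''
        ((fun w : (κ ⊕ ι) → ℝ => w ∘ E.symm) '' P)) := by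
      rw [hU1, elim_spec]
      exact ⟨elimSys U1, rfl⟩
    have h3 := ih (Fin k) inferInstance inferInstance (by simp) _ h2
    have heq : ((fun w : Fin k ⊕ ι → ℝ => w ∘ Sum.inr) ''
        ((fun w : Option (Fin k ⊕ ι) → ℝ => w ∘ some) ''
          ((fun w : (κ ⊕ ι) → ℝ => w ∘ E.symm) '' P)))
        = (fun w : (κ ⊕ ι) → ℝ => w ∘ Sum.inr) '' P := by
      rw [Set.image_image, Set.image_image]
      apply Set.image_congr
      intro w _
      funext i
      show w (E.symm (some (Sum.inr i))) = w (Sum.inr i)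
      have hE : E.symm (some (Sum.inr i)) = Sum.inr i := by
        rw [← show E (Sum.inr i) = some (Sum.inr i) from rfl, Equiv.symm_apply_apply]
      rw [hE]
    rwa [heq] at h3

/-- projecting out the left factor of a polyhedral set is polyhedral -/
theorem PolyZ.restrict {ι : Type} [Fintype ι] [DecidableEq ι] {κ : Type} [Fintype κ]
    [DecidableEq κ] {P : Set (κ ⊕ ι → ℝ)} (h : PolyZ P) :
    PolyZ ((fun w => w ∘ Sum.inr) '' P) :=
  isPoly_restrict_aux (Fintype.card κ) κ inferInstance inferInstance rfl P h

section Weyl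
open Finset

variable {ι : Type} [Fintype ι] [DecidableEq ι]

/-- integer vector cast to real -/
def zvec {ι : Type*} (v : ι → ℤ) : ι → ℝ := fun i => (v i : ℝ)

/-- cone generated by finitely many integer vectors -/
def genCone {ι : Type*} (s : Finset (ι → ℤ)) : Set (ι → ℝ) :=
  {x | ∃ c : (ι → ℤ) → ℝ, (∀ v, 0 ≤ c v) ∧ x = ∑ v ∈ s, c v • zvec v}

lemma dotZ_sum_type {κ : Type*} [Fintype κ] (u : κ ⊕ ι → ℤ) (w : κ ⊕ ι → ℝ) :
    dotZ u w = ∑ v : κ, (u (Sum.inl v) : ℝ) * w (Sum.inl v)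
      + ∑ i : ι, (u (Sum.inr i) : ℝ) * w (Sum.inr i) := by
  simp [dotZ, Fintype.sum_sum_type]

lemma dotZ_indicator {γ : Type*} [Fintype γ] [DecidableEq γ] (a : γ) (w : γ → ℝ) :
    dotZ (fun o => if o = a then 1 else 0) w = w a := by
  simp only [dotZ]
  rw [Finset.sum_eq_single a]
  · simp
  · intro b _ hb; simp [hb]
  · intro h; exact absurd (Finset.mem_univ a) h

lemma dotZ_neg (u : ι → ℤ) (w : ι → ℝ) : dotZ (-u) w = -dotZ u w := by
  simp [dotZ, Finset.sum_neg_distrib]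

/-- Weyl: a finitely generated rational cone is polyhedral. -/
theorem genCone_polyZ (s : Finset (ι → ℤ)) : PolyZ (genCone s) := by
  classical
  set κ := {v // v ∈ s}
  let gvec : ι → (κ ⊕ ι → ℤ) := fun i =>
    Sum.elim (fun v : κ => -(v.1 i)) (fun i' => if i' = i then 1 else 0)
  let W : Finset (κ ⊕ ι → ℤ) :=
    ((univ : Finset κ).image fun v => (fun o => if o = Sum.inl v then 1 else 0))
    ∪ ((univ : Finset ι).image gvec)
    ∪ ((univ : Finset ι).image (fun i => -(gvec i)))
  have hgv : ∀ (i : ι) (w : κ ⊕ ι → ℝ),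
      dotZ (gvec i) w = -∑ v : κ, (v.1 i : ℝ) * w (Sum.inl v) + w (Sum.inr i) := by
    intro i w
    rw [dotZ_sum_type]
    congr 1
    · simp [gvec, Finset.sum_neg_distrib]
    · show dotZ (fun i' => if i' = i then 1 else 0) (fun i' => w (Sum.inr i')) = _
      rw [dotZ_indicator]
  have hmain : genCone s = (fun w : κ ⊕ ι → ℝ => w ∘ Sum.inr) '' solSet W := by
    ext x
    constructor
    · rintro ⟨c, hc, rfl⟩
      refine ⟨Sum.elim (fun v : κ => c v.1) (∑ v ∈ s, c v • zvec v), ?_, rfl⟩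
      intro u hu
      simp only [W, Finset.mem_union, Finset.mem_image, Finset.mem_univ, true_and] at hu
      have hxi : ∀ i, (∑ v ∈ s, c v • zvec v) i = ∑ v : κ, (v.1 i : ℝ) * c v.1 := by
        intro i
        rw [Finset.sum_apply]
        rw [← Finset.sum_coe_sort s (fun v => (c v • zvec v) i)]
        exact Finset.sum_congr rfl fun v _ => by simp [zvec]; ring
      rcases hu with (⟨v, rfl⟩ | ⟨i, rfl⟩) | ⟨i, rfl⟩
      · rw [dotZ_indicator]; exact hc _
      · rw [hgv]; simp [hxi]
      · rw [dotZ_neg, hgv]; simp [hxi]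
    · rintro ⟨w, hw, rfl⟩
      refine ⟨fun v => if h : v ∈ s then w (Sum.inl ⟨v, h⟩) else 0, ?_, ?_⟩
      · intro v
        show (0:ℝ) ≤ dite (v ∈ s) (fun h => w (Sum.inl ⟨v, h⟩)) (fun _ => 0)
        by_cases h : v ∈ s
        · rw [dif_pos h]
          have hmem : (fun o => if o = Sum.inl (⟨v, h⟩ : κ) then 1 else 0) ∈ W :=
            Finset.mem_union_left _ (Finset.mem_union_left _
              (Finset.mem_image.2 ⟨⟨v, h⟩, Finset.mem_univ _, rfl⟩))
          have := hw _ hmem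
          rwa [dotZ_indicator] at this
        · rw [dif_neg h]
      · funext i
        have h1 := hw _ (Finset.mem_union_left _ (Finset.mem_union_right _
          (Finset.mem_image.2 ⟨i, Finset.mem_univ _, rfl⟩)))
        have h2 := hw _ (Finset.mem_union_right _
          (Finset.mem_image.2 ⟨i, Finset.mem_univ _, rfl⟩))
        rw [dotZ_neg] at h2
        have heq : dotZ (gvec i) w = 0 := le_antisymm (by linarith) h1
        rw [hgv] at heq
        show w (Sum.inr i) = (∑ v ∈ s, _ • zvec v) i
        rw [Finset.sum_apply, ← Finset.sum_coe_sort s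
          (fun v => ((if h : v ∈ s then w (Sum.inl ⟨v, h⟩) else 0) • zvec v) i)]
        have : ∀ v : κ, ((if h : v.1 ∈ s then w (Sum.inl ⟨v.1, h⟩) else 0) • zvec v.1) i
            = (v.1 i : ℝ) * w (Sum.inl v) := by
          intro v
          rw [dif_pos v.2]
          simp [zvec]
          ring
        rw [Finset.sum_congr rfl fun v _ => this v]
        linarith
  rw [hmain]
  exact PolyZ.restrict ⟨W, rfl⟩

lemma mem_genCone_self {ι : Type*} {s : Finset (ι → ℤ)} {v : ι → ℤ} (hv : v ∈ s) :
    zvec v ∈ genCone s := by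
  classical
  refine ⟨fun w => if w = v then 1 else 0, fun w => by positivity, ?_⟩
  rw [Finset.sum_eq_single v]
  · simp
  · intro b _ hb; simp [hb]
  · intro h; exact absurd hv h

lemma dotZ_zvec_comm (u v : ι → ℤ) : dotZ u (zvec v) = dotZ v (zvec u) := by
  simp only [dotZ, zvec]
  exact Finset.sum_congr rfl fun i _ => by ring

lemma genCone_subset_solSet {s : Finset (ι → ℤ)} {U : Finset (ι → ℤ)}
    (h : ∀ v ∈ s, zvec v ∈ solSet U) : genCone s ⊆ solSet U := by
  rintro x ⟨c, hc, rfl⟩ u hu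
  rw [dotZ_finsum]
  refine Finset.sum_nonneg fun v hv => ?_
  rw [dotZ_smul]
  exact mul_nonneg (hc v) (h v hv u hu)

/-- Minkowski: a rational polyhedral cone is finitely generated. -/
theorem solSet_genCone (B : Finset (ι → ℤ)) : ∃ s : Finset (ι → ℤ), solSet B = genCone s := by
  obtain ⟨C, hC⟩ := genCone_polyZ B
  obtain ⟨Ec, hE⟩ := genCone_polyZ C
  refine ⟨C, ?_⟩
  apply Set.Subset.antisymm
  · intro x hx
    rw [hE]
    intro e he
    have hvec : zvec e ∈ solSet C := by
      intro c hc
      have : zvec c ∈ genCone C := mem_genCone_self hc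
      rw [hE] at this
      rw [dotZ_zvec_comm]
      exact this e he
    rw [← hC] at hvec
    obtain ⟨lam, hlam, hsum⟩ := hvec
    have : dotZ e x = ∑ b ∈ B, lam b * dotZ b x := by
      have hd : ∀ y : ι → ℝ, dotZ e y = ∑ i, (zvec e) i * y i := fun y => rfl
      rw [hd, hsum]
      rw [show (∑ i, (∑ b ∈ B, lam b • zvec b) i * x i) = ∑ b ∈ B, lam b * (∑ i, (b i : ℝ) * x i) by
        simp only [Finset.sum_apply, Finset.sum_mul, Finset.mul_sum]
        rw [Finset.sum_comm]
        refine Finset.sum_congr rfl fun b _ => Finset.sum_congr rfl fun i _ => by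
          simp [zvec]; ring]
      rfl
    rw [this]
    exact Finset.sum_nonneg fun b hb => mul_nonneg (hlam b) (hx b hb)
  · apply genCone_subset_solSet
    intro c hc b hb
    have : zvec b ∈ genCone B := mem_genCone_self hb
    rw [hC] at this
    rw [dotZ_zvec_comm]
    exact this c hc

end Weyl

section App
open Finset
open scoped Classical

variable {m n : ℕ}

lemma ratCone_eq_genCone (s : Finset (Fin n → ℤ)) : ratCone s = genCone s := rfl

lemma isRatCone_iff_polyZ {σ : Set (Fin n → ℝ)} : IsRatCone σ ↔ PolyZ σ := by
  constructor
  · rintro ⟨s, rfl⟩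
    rw [ratCone_eq_genCone]
    exact genCone_polyZ s
  · rintro ⟨U, rfl⟩
    obtain ⟨s, hs⟩ := solSet_genCone U
    exact ⟨s, by rw [hs, ratCone_eq_genCone]⟩

lemma dotZ_dualMap (A : Matrix (Fin m) (Fin n) ℤ) (u : Fin m → ℤ) (x : Fin n → ℝ) :
    dotZ (dualMap A u) x = dotZ u (mulVecR A x) := by
  simp only [dotZ, dualMap, mulVecR, Finset.mul_sum]
  push_cast
  simp only [Finset.sum_mul]
  rw [Finset.sum_comm]
  exact Finset.sum_congr rfl fun i _ => Finset.sum_congr rfl fun j _ => by ring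

lemma polyZ_preimage (A : Matrix (Fin m) (Fin n) ℤ) {κ : Set (Fin m → ℝ)} (h : PolyZ κ) :
    PolyZ ((mulVecR A) ⁻¹' κ) := by
  obtain ⟨V, rfl⟩ := h
  refine ⟨V.image (dualMap A), ?_⟩
  ext x
  constructor
  · intro hx u' hu'
    obtain ⟨v, hv, rfl⟩ := Finset.mem_image.1 hu'
    rw [dotZ_dualMap]
    exact hx v hv
  · intro hx v hv
    have := hx _ (Finset.mem_image.2 ⟨v, hv, rfl⟩)
    rwa [dotZ_dualMap] at this

lemma solSet_inter {ι : Type} [Fintype ι] (U V : Finset (ι → ℤ)) :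
    solSet U ∩ solSet V = solSet (U ∪ V) := by
  ext x
  simp only [Set.mem_inter_iff, solSet, Set.mem_setOf_eq, Finset.mem_union]
  constructor
  · rintro ⟨h1, h2⟩ u (h | h); exacts [h1 u h, h2 u h]
  · intro h; exact ⟨fun u hu => h u (Or.inl hu), fun u hu => h u (Or.inr hu)⟩

lemma dotR_smul {ι : Type*} [Fintype ι] (u : ι → ℝ) (c : ℝ) (x : ι → ℝ) :
    dotR u (c • x) = c * dotR u x := by
  simp only [dotR, Pi.smul_apply, smul_eq_mul, Finset.mul_sum]
  exact Finset.sum_congr rfl fun i _ => by ring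

lemma dotR_sub {ι : Type*} [Fintype ι] (u : ι → ℝ) (x y : ι → ℝ) :
    dotR u (x - y) = dotR u x - dotR u y := by
  simp only [dotR, Pi.sub_apply, mul_sub, Finset.sum_sub_distrib]

lemma dotR_finsum {ι : Type*} [Fintype ι] {γ : Type*} (u : ι → ℝ) (s : Finset γ) (f : γ → ι → ℝ) :
    dotR u (∑ v ∈ s, f v) = ∑ v ∈ s, dotR u (f v) := by
  simp only [dotR, Finset.sum_apply, Finset.mul_sum]
  exact Finset.sum_comm

lemma dotR_sumfun {ι : Type*} [Fintype ι] {γ : Type*} (T : Finset γ) (f : γ → ι → ℝ)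
    (x : ι → ℝ) : dotR (fun i => ∑ u ∈ T, f u i) x = ∑ u ∈ T, dotR (f u) x := by
  simp only [dotR, Finset.sum_mul]
  exact Finset.sum_comm

lemma genCone_mono {ι : Type*} {s t : Finset (ι → ℤ)} (h : s ⊆ t) : genCone s ⊆ genCone t := by
  classical
  rintro x ⟨c, hc, rfl⟩
  refine ⟨fun v => if v ∈ s then c v else 0, fun v => by by_cases hv : v ∈ s <;> simp [hv, hc v], ?_⟩
  rw [← Finset.sum_subset h (fun v _ hv => by simp [hv])]
  exact Finset.sum_congr rfl fun v hv => by simp [hv]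

lemma mem_genCone_sum {ι : Type*} (s : Finset (ι → ℤ)) : (∑ w ∈ s, zvec w) ∈ genCone s := by
  classical
  refine ⟨fun v => if v ∈ s then 1 else 0, fun v => by by_cases hv : v ∈ s <;> simp [hv], ?_⟩
  exact Finset.sum_congr rfl fun v hv => by simp [hv]

/-- the face of a finitely generated cone cut out by `u` is generated by the generators
on which `u` vanishes. -/
lemma face_genCone {ι : Type*} [Fintype ι] (W : Finset (ι → ℤ)) (u : ι → ℝ)
    (hu : ∀ x ∈ genCone W, 0 ≤ dotR u x) :
    {x ∈ genCone W | dotR u x = 0} = genCone (W.filter (fun w => dotR u (zvec w) = 0)) := by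
  apply Set.Subset.antisymm
  · rintro x ⟨⟨c, hc, rfl⟩, hzero⟩
    have hterm : ∀ w ∈ W, c w * dotR u (zvec w) = 0 := by
      have h1 : dotR u (∑ v ∈ W, c v • zvec v) = ∑ v ∈ W, c v * dotR u (zvec v) := by
        rw [dotR_finsum]
        exact Finset.sum_congr rfl fun v _ => dotR_smul _ _ _
      rw [h1] at hzero
      have := (Finset.sum_eq_zero_iff_of_nonneg (fun v hv =>
        mul_nonneg (hc v) (hu _ (mem_genCone_self hv)))).1 hzero
      exact this
    refine ⟨c, hc, ?_⟩
    rw [Finset.sum_subset (Finset.filter_subset _ _)]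
    intro w hw hnw
    rcases mul_eq_zero.1 (hterm w hw) with h | h
    · simp [h]
    · exact absurd (Finset.mem_filter.2 ⟨hw, h⟩) hnw
  · rintro x ⟨c, hc, rfl⟩
    refine ⟨genCone_mono (Finset.filter_subset _ _) ⟨c, hc, rfl⟩, ?_⟩
    rw [dotR_finsum]
    rw [Finset.sum_eq_zero]
    intro v hv
    rw [dotR_smul, (Finset.mem_filter.1 hv).2, mul_zero]

lemma mulVecR_smul (A : Matrix (Fin m) (Fin n) ℤ) (c : ℝ) (x : Fin n → ℝ) :
    mulVecR A (c • x) = c • mulVecR A x := by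
  funext j
  simp only [mulVecR, Pi.smul_apply, smul_eq_mul, Finset.mul_sum]
  exact Finset.sum_congr rfl fun i _ => by ring

lemma mulVecR_sub (A : Matrix (Fin m) (Fin n) ℤ) (x y : Fin n → ℝ) :
    mulVecR A (x - y) = mulVecR A x - mulVecR A y := by
  funext j
  simp only [mulVecR, Pi.sub_apply, mul_sub, Finset.sum_sub_distrib]

lemma mulVecR_finsum {γ : Type*} (A : Matrix (Fin m) (Fin n) ℤ) (s : Finset γ)
    (f : γ → Fin n → ℝ) : mulVecR A (∑ v ∈ s, f v) = ∑ v ∈ s, mulVecR A (f v) := by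
  funext j
  simp only [mulVecR, Finset.sum_apply, Finset.mul_sum]
  exact Finset.sum_comm

lemma exists_eps {γ : Type*} (T : Finset γ) (a b : γ → ℝ)
    (h : ∀ t ∈ T, (a t = 0 ∧ b t = 0) ∨ 0 < a t) :
    ∃ ε : ℝ, 0 < ε ∧ ∀ ε' : ℝ, 0 < ε' → ε' ≤ ε → ∀ t ∈ T, 0 ≤ a t - ε' * b t := by
  classical
  induction T using Finset.induction_on with
  | empty => exact ⟨1, one_pos, by simp⟩
  | @insert t0 T ht0 ih =>
    obtain ⟨ε, hε, hall⟩ := ih fun t' ht' => h t' (Finset.mem_insert_of_mem ht')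
    rcases h t0 (Finset.mem_insert_self t0 T) with ⟨ha, hb⟩ | ha
    · refine ⟨ε, hε, fun ε' hε' hle t' ht' => ?_⟩
      rcases Finset.mem_insert.1 ht' with rfl | ht'
      · simp [ha, hb]
      · exact hall ε' hε' hle t' ht'
    · have hmax : (0:ℝ) < max (b t0) 1 := lt_of_lt_of_le one_pos (le_max_right _ _)
      refine ⟨min ε (a t0 / max (b t0) 1), lt_min hε (div_pos ha hmax), fun ε' hε' hle t' ht' => ?_⟩
      rcases Finset.mem_insert.1 ht' with rfl | ht'
      · by_cases hbt : b t' ≤ 0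
        · nlinarith
        · push_neg at hbt
          have h1 : ε' ≤ a t' / max (b t') 1 := le_trans hle (min_le_right _ _)
          have h2 : ε' * b t' ≤ (a t' / max (b t') 1) * b t' :=
            mul_le_mul_of_nonneg_right h1 hbt.le
          have h3 : (a t' / max (b t') 1) * b t' ≤ (a t' / max (b t') 1) * max (b t') 1 :=
            mul_le_mul_of_nonneg_left (le_max_left _ _) (div_nonneg ha.le (le_of_lt hmax))
          have h4 : (a t' / max (b t') 1) * max (b t') 1 = a t' := div_mul_cancel₀ _ hmax.ne'
          linarith
      · exact hall ε' hε' (le_trans hle (min_le_left _ _)) t' ht'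

end App

section Face
open Finset
open scoped Classical

lemma face_mem_minMod {m n : ℕ} (A : Matrix (Fin m) (Fin n) ℤ)
    {F : Set (Set (Fin n → ℝ))} {G : Set (Set (Fin m → ℝ))}
    (hF : IsFan F) (hG : IsFan G) {κ : Set (Fin m → ℝ)} {σ : Set (Fin n → ℝ)}
    (hκ : κ ∈ G) (hσ : σ ∈ F) {τ : Set (Fin n → ℝ)}
    (hτ : IsFaceOf τ ((mulVecR A) ⁻¹' κ ∩ σ)) :
    τ ∈ minMod A F G := by
  classical
  obtain ⟨u, hu, hτeq⟩ := hτ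
  obtain ⟨U, hU⟩ : PolyZ σ := isRatCone_iff_polyZ.1 (hF.2.1 σ hσ).1
  obtain ⟨V, hV⟩ : PolyZ κ := isRatCone_iff_polyZ.1 (hG.2.1 κ hκ).1
  set t : Set (Fin n → ℝ) := (mulVecR A) ⁻¹' κ ∩ σ with htdef
  obtain ⟨V', hV'⟩ := polyZ_preimage A ⟨V, hV⟩
  have htsol : t = solSet (V' ∪ U) := by rw [htdef, ← solSet_inter, ← hV', ← hU]
  obtain ⟨W, hWg⟩ := solSet_genCone (V' ∪ U)
  have hW : t = genCone W := by rw [htsol, hWg]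
  have hu' : ∀ x ∈ genCone W, 0 ≤ dotR u x := by rw [← hW]; exact hu
  set W₀ := W.filter (fun w => dotR u (zvec w) = 0) with hW₀
  have hτg : τ = genCone W₀ := by
    rw [hτeq, hW]
    exact face_genCone W u hu'
  set x₀ : Fin n → ℝ := ∑ w ∈ W₀, zvec w with hx₀
  have hx₀τ : x₀ ∈ τ := by rw [hτg]; exact mem_genCone_sum W₀
  have hτt : τ ⊆ t := by rw [hτeq]; exact fun x hx => hx.1
  have hx₀t : x₀ ∈ t := hτt hx₀τ
  have hWt : ∀ w ∈ W, zvec w ∈ t := fun w hw => by rw [hW]; exact mem_genCone_self hw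
  -- the minimal face of σ containing x₀
  set U₀ := U.filter (fun u' => dotZ u' x₀ = 0) with hU₀
  set σ' : Set (Fin n → ℝ) := {x ∈ σ | ∀ u' ∈ U₀, dotZ u' x = 0} with hσ'
  have hσnn : ∀ x ∈ σ, ∀ u' ∈ U, 0 ≤ dotZ u' x := by
    intro x hx; rw [hU] at hx; exact hx
  have hσ'face : IsFaceOf σ' σ := by
    refine ⟨fun i => ∑ u' ∈ U₀, ((u' i : ℤ) : ℝ), ?_, ?_⟩
    · intro x hx
      show (0:ℝ) ≤ dotR (fun i => ∑ u' ∈ U₀, ((u' i : ℤ) : ℝ)) x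
      rw [dotR_sumfun]
      exact Finset.sum_nonneg fun u' h => hσnn x hx u' (Finset.mem_filter.1 h).1
    · ext x
      simp only [hσ', Set.mem_setOf_eq]
      constructor
      · rintro ⟨hxσ, hzero⟩
        refine ⟨hxσ, ?_⟩
        show dotR (fun i => ∑ u' ∈ U₀, ((u' i : ℤ) : ℝ)) x = 0
        rw [dotR_sumfun]
        exact Finset.sum_eq_zero fun u' h => hzero u' h
      · rintro ⟨hxσ, hzero⟩
        refine ⟨hxσ, ?_⟩
        have hz : dotR (fun i => ∑ u' ∈ U₀, ((u' i : ℤ) : ℝ)) x = 0 := hzero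
        rw [dotR_sumfun] at hz
        exact (Finset.sum_eq_zero_iff_of_nonneg fun u' h =>
          hσnn x hxσ u' (Finset.mem_filter.1 h).1).1 hz
  have hσ'F : σ' ∈ F := hF.2.2.1 σ hσ σ' hσ'face
  -- the minimal face of κ containing A x₀
  have hκnn : ∀ y ∈ κ, ∀ v ∈ V, 0 ≤ dotZ v y := by
    intro y hy; rw [hV] at hy; exact hy
  set y₀ : Fin m → ℝ := mulVecR A x₀ with hy₀def
  set V₀ := V.filter (fun v => dotZ v y₀ = 0) with hV₀
  set κ' : Set (Fin m → ℝ) := {y ∈ κ | ∀ v ∈ V₀, dotZ v y = 0} with hκ'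
  have hκ'face : IsFaceOf κ' κ := by
    refine ⟨fun j => ∑ v ∈ V₀, ((v j : ℤ) : ℝ), ?_, ?_⟩
    · intro y hy
      show (0:ℝ) ≤ dotR (fun j => ∑ v ∈ V₀, ((v j : ℤ) : ℝ)) y
      rw [dotR_sumfun]
      exact Finset.sum_nonneg fun v h => hκnn y hy v (Finset.mem_filter.1 h).1
    · ext y
      simp only [hκ', Set.mem_setOf_eq]
      constructor
      · rintro ⟨hyκ, hzero⟩
        refine ⟨hyκ, ?_⟩
        show dotR (fun j => ∑ v ∈ V₀, ((v j : ℤ) : ℝ)) y = 0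
        rw [dotR_sumfun]
        exact Finset.sum_eq_zero fun v h => hzero v h
      · rintro ⟨hyκ, hzero⟩
        refine ⟨hyκ, ?_⟩
        have hz : dotR (fun j => ∑ v ∈ V₀, ((v j : ℤ) : ℝ)) y = 0 := hzero
        rw [dotR_sumfun] at hz
        exact (Finset.sum_eq_zero_iff_of_nonneg fun v h =>
          hκnn y hyκ v (Finset.mem_filter.1 h).1).1 hz
  have hκ'G : κ' ∈ G := hG.2.2.1 κ hκ κ' hκ'face
  -- vanishing of the active constraints on the generators of τ
  have hy₀sum : y₀ = ∑ w ∈ W₀, mulVecR A (zvec w) := by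
    rw [hy₀def, hx₀, mulVecR_finsum]
  have hvanU : ∀ u' ∈ U₀, ∀ w ∈ W₀, dotZ u' (zvec w) = 0 := by
    intro u' hu'₀ w hw
    have hsum : ∑ w ∈ W₀, dotZ u' (zvec w) = 0 := by
      rw [← dotZ_finsum]
      exact (Finset.mem_filter.1 hu'₀).2
    exact (Finset.sum_eq_zero_iff_of_nonneg fun w' hw' =>
      hσnn _ (hWt w' (Finset.filter_subset _ _ hw')).2 u'
        (Finset.mem_filter.1 hu'₀).1).1 hsum w hw
  have hvanV : ∀ v ∈ V₀, ∀ w ∈ W₀, dotZ v (mulVecR A (zvec w)) = 0 := by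
    intro v hv₀ w hw
    have hsum : ∑ w ∈ W₀, dotZ v (mulVecR A (zvec w)) = 0 := by
      rw [← dotZ_finsum, ← hy₀sum]
      exact (Finset.mem_filter.1 hv₀).2
    exact (Finset.sum_eq_zero_iff_of_nonneg fun w' hw' =>
      hκnn _ (hWt w' (Finset.filter_subset _ _ hw')).1 v
        (Finset.mem_filter.1 hv₀).1).1 hsum w hw
  -- the main claim
  refine ⟨κ', hκ'G, σ', hσ'F, ?_⟩
  apply Set.Subset.antisymm
  · intro x hx
    have hxt : x ∈ t := hτt hx
    rw [hτg] at hx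
    obtain ⟨c, hc, rfl⟩ := hx
    constructor
    · -- image in κ'
      refine ⟨hxt.1, ?_⟩
      intro v hv
      rw [mulVecR_finsum, dotZ_finsum]
      refine Finset.sum_eq_zero fun w hw => ?_
      rw [mulVecR_smul, dotZ_smul, hvanV v hv w hw, mul_zero]
    · refine ⟨hxt.2, ?_⟩
      intro u' hu'₀
      rw [dotZ_finsum]
      refine Finset.sum_eq_zero fun w hw => ?_
      rw [dotZ_smul, hvanU u' hu'₀ w hw, mul_zero]
  · rintro x ⟨hxκ', hxσ'⟩
    have hxt : x ∈ t := ⟨hxκ'.1, hxσ'.1⟩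
    have hyp1 : ∀ u' ∈ U, (dotZ u' x₀ = 0 ∧ dotZ u' x = 0) ∨ 0 < dotZ u' x₀ := by
      intro u' hu'U
      by_cases h0 : dotZ u' x₀ = 0
      · exact Or.inl ⟨h0, hxσ'.2 u' (Finset.mem_filter.2 ⟨hu'U, h0⟩)⟩
      · exact Or.inr (lt_of_le_of_ne (hσnn x₀ hx₀t.2 u' hu'U) (Ne.symm h0))
    have hyp2 : ∀ v ∈ V, (dotZ v y₀ = 0 ∧ dotZ v (mulVecR A x) = 0) ∨ 0 < dotZ v y₀ := by
      intro v hvV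
      by_cases h0 : dotZ v y₀ = 0
      · exact Or.inl ⟨h0, hxκ'.2 v (Finset.mem_filter.2 ⟨hvV, h0⟩)⟩
      · exact Or.inr (lt_of_le_of_ne (hκnn y₀ hx₀t.1 v hvV) (Ne.symm h0))
    obtain ⟨ε₁, hε₁, hE1⟩ := exists_eps U (fun u' => dotZ u' x₀) (fun u' => dotZ u' x) hyp1
    obtain ⟨ε₂, hε₂, hE2⟩ := exists_eps V (fun v => dotZ v y₀) (fun v => dotZ v (mulVecR A x)) hyp2
    set ε := min ε₁ ε₂ with hεdef
    have hεpos : 0 < ε := lt_min hε₁ hε₂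
    have hz : x₀ - ε • x ∈ t := by
      constructor
      · show mulVecR A (x₀ - ε • x) ∈ κ
        rw [mulVecR_sub, mulVecR_smul, hV]
        intro v hv
        rw [dotZ_sub, dotZ_smul]
        exact hE2 ε hεpos (min_le_right _ _) v hv
      · rw [hU]
        intro u' hu'U
        rw [dotZ_sub, dotZ_smul]
        exact hE1 ε hεpos (min_le_left _ _) u' hu'U
    have h1 : (0:ℝ) ≤ dotR u (x₀ - ε • x) := hu _ hz
    have h2 : dotR u x₀ = 0 := by
      rw [hτeq] at hx₀τ
      exact hx₀τ.2
    have h3 : (0:ℝ) ≤ dotR u x := hu _ hxt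
    rw [dotR_sub, dotR_smul, h2] at h1
    have h4 : dotR u x = 0 := le_antisymm (by nlinarith) h3
    rw [hτeq]
    exact ⟨hxt, h4⟩

end Face

/-- Let `p : N → Q` be a lattice homomorphism (the matrix
`A`), `F` a fan in `N` and `G` a fan in `Q`.  Then
`F' := {p_ℝ⁻¹(κ) ∩ σ : κ ∈ G, σ ∈ F}` is a fan in `N`; it refines `F` and its
support is `p_ℝ⁻¹(Supp G) ∩ Supp F`; the map `p` sends every cone of `F'` into
a cone of `G`; and `F'` is minimal with these properties: any fan `F''`
refining `F`, with the same support, such that `p` maps each cone of `F''` into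
a cone of `G`, refines `F'`. -/
theorem minimal_modification {m n : ℕ}
    (A : Matrix (Fin m) (Fin n) ℤ)
    (F : Set (Set (Fin n → ℝ))) (G : Set (Set (Fin m → ℝ)))
    (hF : IsFan F) (hG : IsFan G) :
    IsFan (minMod A F G) ∧
    (∀ t ∈ minMod A F G, ∃ σ ∈ F, t ⊆ σ) ∧
    ⋃₀ minMod A F G = (mulVecR A) ⁻¹' (⋃₀ G) ∩ ⋃₀ F ∧
    (∀ t ∈ minMod A F G, ∃ κ ∈ G, mulVecR A '' t ⊆ κ) ∧
    (∀ F'' : Set (Set (Fin n → ℝ)), IsFan F'' →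
      (∀ t ∈ F'', ∃ σ ∈ F, t ⊆ σ) →
      ⋃₀ F'' = ⋃₀ minMod A F G →
      (∀ t ∈ F'', ∃ κ ∈ G, mulVecR A '' t ⊆ κ) →
      ∀ t ∈ F'', ∃ t' ∈ minMod A F G, t ⊆ t') := by
  classical
  have hfin : (minMod A F G).Finite := by
    have himg : minMod A F G = Set.image2 (fun κ σ => (mulVecR A) ⁻¹' κ ∩ σ) G F := by
      ext t
      simp only [minMod, Set.mem_setOf_eq, Set.mem_image2]
      constructor
      · rintro ⟨κ, hκ, σ, hσ, rfl⟩; exact ⟨κ, hκ, σ, hσ, rfl⟩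
      · rintro ⟨κ, hκ, σ, hσ, rfl⟩; exact ⟨κ, hκ, σ, hσ, rfl⟩
    rw [himg]
    exact Set.Finite.image2 _ hG.1 hF.1
  have hcone : ∀ t ∈ minMod A F G, IsRatCone t ∧ IsSharp t := by
    rintro t ⟨κ, hκ, σ, hσ, rfl⟩
    constructor
    · rw [isRatCone_iff_polyZ]
      obtain ⟨U, hU⟩ := isRatCone_iff_polyZ.1 (hF.2.1 σ hσ).1
      obtain ⟨V', hV'⟩ := polyZ_preimage A (isRatCone_iff_polyZ.1 (hG.2.1 κ hκ).1)
      refine ⟨V' ∪ U, ?_⟩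
      rw [hV', hU, solSet_inter]
    · intro x hx hnx
      exact (hF.2.1 σ hσ).2 x hx.2 hnx.2
  have hface : ∀ t ∈ minMod A F G, ∀ τ, IsFaceOf τ t → τ ∈ minMod A F G := by
    rintro t ⟨κ, hκ, σ, hσ, rfl⟩ τ hτ
    exact face_mem_minMod A hF hG hκ hσ hτ
  have hinter : ∀ t ∈ minMod A F G, ∀ t' ∈ minMod A F G, IsFaceOf (t ∩ t') t := by
    rintro t ⟨κ, hκ, σ, hσ, rfl⟩ t' ⟨κ', hκ', σ', hσ', rfl⟩
    obtain ⟨uκ, huκ, hκeq⟩ := hG.2.2.2 κ hκ κ' hκ'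
    obtain ⟨uσ, huσ, hσeq⟩ := hF.2.2.2 σ hσ σ' hσ'
    have hdot : ∀ x : Fin n → ℝ, dotR (fun i => uσ i + ∑ j, uκ j * (A j i : ℝ)) x
        = dotR uσ x + dotR uκ (mulVecR A x) := by
      intro x
      simp only [dotR, mulVecR, add_mul, Finset.sum_add_distrib, Finset.sum_mul, Finset.mul_sum]
      congr 1
      rw [Finset.sum_comm]
      exact Finset.sum_congr rfl fun j _ => Finset.sum_congr rfl fun i _ => by ring
    refine ⟨fun i => uσ i + ∑ j, uκ j * (A j i : ℝ), ?_, ?_⟩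
    · rintro x ⟨hxκ, hxσ⟩
      show (0:ℝ) ≤ dotR (fun i => uσ i + ∑ j, uκ j * (A j i : ℝ)) x
      rw [hdot]
      exact add_nonneg (huσ x hxσ) (huκ _ hxκ)
    · ext x
      constructor
      · rintro ⟨⟨hxκ, hxσ⟩, ⟨hxκ', hxσ'⟩⟩
        refine ⟨⟨hxκ, hxσ⟩, ?_⟩
        show dotR (fun i => uσ i + ∑ j, uκ j * (A j i : ℝ)) x = 0
        rw [hdot]
        have h1 : dotR uκ (mulVecR A x) = 0 := by
          have hmem : mulVecR A x ∈ κ ∩ κ' := ⟨hxκ, hxκ'⟩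
          rw [hκeq] at hmem
          exact hmem.2
        have h2 : dotR uσ x = 0 := by
          have hmem : x ∈ σ ∩ σ' := ⟨hxσ, hxσ'⟩
          rw [hσeq] at hmem
          exact hmem.2
        rw [h1, h2, add_zero]
      · rintro ⟨⟨hxκ, hxσ⟩, hzero⟩
        have hz : dotR uσ x + dotR uκ (mulVecR A x) = 0 := by
          rw [← hdot]; exact hzero
        have h1 : (0:ℝ) ≤ dotR uσ x := huσ x hxσ
        have h2 : (0:ℝ) ≤ dotR uκ (mulVecR A x) := huκ _ hxκ
        have h3 : dotR uσ x = 0 := by linarith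
        have h4 : dotR uκ (mulVecR A x) = 0 := by linarith
        have hxσσ' : x ∈ σ ∩ σ' := by rw [hσeq]; exact ⟨hxσ, h3⟩
        have hxκκ' : mulVecR A x ∈ κ ∩ κ' := by rw [hκeq]; exact ⟨hxκ, h4⟩
        exact ⟨⟨hxκ, hxσ⟩, ⟨hxκκ'.2, hxσσ'.2⟩⟩
  refine ⟨⟨hfin, hcone, hface, hinter⟩, ?_, ?_, ?_, ?_⟩
  · rintro t ⟨κ, hκ, σ, hσ, rfl⟩
    exact ⟨σ, hσ, Set.inter_subset_right⟩
  · apply Set.Subset.antisymm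
    · rintro x ⟨t, ⟨κ, hκ, σ, hσ, rfl⟩, hx⟩
      exact ⟨⟨κ, hκ, hx.1⟩, ⟨σ, hσ, hx.2⟩⟩
    · rintro x ⟨⟨κ, hκ, hxκ⟩, ⟨σ, hσ, hxσ⟩⟩
      exact ⟨(mulVecR A) ⁻¹' κ ∩ σ, ⟨κ, hκ, σ, hσ, rfl⟩, ⟨hxκ, hxσ⟩⟩
  · rintro t ⟨κ, hκ, σ, hσ, rfl⟩
    refine ⟨κ, hκ, ?_⟩
    rintro y ⟨x, hx, rfl⟩
    exact hx.1
  · intro F'' hF'' hrefine hsupp hmapsto t ht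
    obtain ⟨σ, hσ, htσ⟩ := hrefine t ht
    obtain ⟨κ, hκ, htκ⟩ := hmapsto t ht
    refine ⟨(mulVecR A) ⁻¹' κ ∩ σ, ⟨κ, hκ, σ, hσ, rfl⟩, ?_⟩
    intro x hx
    exact ⟨htκ ⟨x, hx, rfl⟩, htσ hx⟩
end
end

section
/- Let p : (F, N) → (G, Q) be a weakly semistable morphism of fans in which both F and G consist of smooth (regular) cones. Then for every σ ∈ F mapping onto κ ∈ G, the projection of monoids N ∩ σ → Q ∩ κ is, after choosing suitable bases, isomorphic to a projection ℕ^a × ℕ^b → ℕ^c of the form given by partial sums; in particular the dual map Q^∨_κ → N^∨_σ makes ℂ[N^∨_σ] a smooth ℂ[Q^∨_κ]-algebra \'etale-locally of semistable type, i.e., the morphism of toric varieties is semistable. -/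
noncomputable section

/-- A cone is smooth (regular) if it is generated by integer vectors which are
part of a ℤ-basis of the lattice. -/
def IsSmoothCone {n : ℕ} (σ : Set (Fin n → ℝ)) : Prop :=
  ∃ (k : ℕ) (h : k ≤ n) (v : Fin k → (Fin n → ℤ))
    (e : (Fin n → ℤ) ≃ₗ[ℤ] (Fin n → ℤ)),
    (∀ i : Fin k, e (Pi.single (Fin.castLE h i) 1) = v i) ∧
    σ = ratCone (Finset.univ.image v)

-- basics
lemma mulVecR_eq {m n : ℕ} (A : Matrix (Fin m) (Fin n) ℤ) (x : Fin n → ℝ) :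
    mulVecR A x = (A.map (Int.cast : ℤ → ℝ)).mulVec x := by
  funext j
  simp [mulVecR, Matrix.mulVec, dotProduct, Matrix.map]

lemma icast_mulVec {m n : ℕ} (A : Matrix (Fin m) (Fin n) ℤ) (v : Fin n → ℤ) :
    icast (A.mulVec v) = mulVecR A (icast v) := by
  funext j
  simp [icast, mulVecR, Matrix.mulVec, dotProduct]

lemma icast_sum_smul {n k : ℕ} (b : Fin k → ℤ) (v : Fin k → (Fin n → ℤ)) :
    icast (∑ i, b i • v i) = ∑ i, (b i : ℝ) • icast (v i) := by
  funext j
  simp [icast, Finset.sum_apply]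

/-- matrix of a ℤ-linear endomorphism -/
def matOf {n : ℕ} (f : (Fin n → ℤ) →ₗ[ℤ] (Fin n → ℤ)) : Matrix (Fin n) (Fin n) ℤ :=
  Matrix.of fun i j => f (Pi.single j 1) i

lemma matOf_mulVec {n : ℕ} (f : (Fin n → ℤ) →ₗ[ℤ] (Fin n → ℤ)) (v : Fin n → ℤ) :
    (matOf f).mulVec v = f v := by
  have hv : v = ∑ j, v j • (Pi.single j 1 : Fin n → ℤ) := by
    funext t
    simp [Finset.sum_apply, Pi.single_apply]
  conv_rhs => rw [hv]
  rw [map_sum]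
  simp only [map_smul]
  funext i
  simp [matOf, Matrix.mulVec, dotProduct, Finset.sum_apply, Pi.smul_apply,
    smul_eq_mul, mul_comm]

/-- real extension of a ℤ-linear endomorphism applied to a real cone combination -/
lemma rext {n k : ℕ} (f : (Fin n → ℤ) →ₗ[ℤ] (Fin n → ℤ)) (x : Fin n → ℤ)
    (c : Fin k → ℝ) (v : Fin k → (Fin n → ℤ))
    (hx : icast x = ∑ i, c i • icast (v i)) :
    icast (f x) = ∑ i, c i • icast (f (v i)) := by
  have h1 : icast (f x) = mulVecR (matOf f) (icast x) := by
    rw [← matOf_mulVec f x, icast_mulVec]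
  have h2 : ∀ i, icast (f (v i)) = mulVecR (matOf f) (icast (v i)) := fun i => by
    rw [← matOf_mulVec f (v i), icast_mulVec]
  rw [h1, hx, mulVecR_eq, ← Matrix.mulVecLin_apply, map_sum]
  refine Finset.sum_congr rfl fun i _ => ?_
  rw [map_smul, Matrix.mulVecLin_apply, h2 i, mulVecR_eq]

section Smooth
variable {n k : ℕ}

lemma single_index_inj {i j : Fin n} (hij : (Pi.single i 1 : Fin n → ℤ) = Pi.single j 1) :
    i = j := by
  by_contra hne
  have h2 := congr_fun hij i
  rw [Pi.single_eq_same, Pi.single_eq_of_ne hne] at h2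
  exact one_ne_zero h2

variable (h : k ≤ n) (e : (Fin n → ℤ) ≃ₗ[ℤ] (Fin n → ℤ))
  (v : Fin k → (Fin n → ℤ))

lemma v_inj (hv : ∀ i, e (Pi.single (Fin.castLE h i) 1) = v i) :
    Function.Injective v := by
  intro i j hij
  rw [← hv i, ← hv j] at hij
  have := single_index_inj (e.injective hij)
  exact Fin.castLE_injective h this

lemma mem_ratCone_image (hvinj : Function.Injective v) (x : Fin n → ℝ) :
    x ∈ ratCone (Finset.univ.image v) ↔
      ∃ c : Fin k → ℝ, (∀ i, 0 ≤ c i) ∧ x = ∑ i, c i • icast (v i) := by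
  constructor
  · rintro ⟨c, hc, rfl⟩
    refine ⟨fun i => c (v i), fun i => hc _, ?_⟩
    rw [Finset.sum_image (fun a _ b _ hab => hvinj hab)]
  · rintro ⟨c, hc, rfl⟩
    classical
    refine ⟨fun u => if hu : ∃ i, v i = u then c hu.choose else 0, ?_, ?_⟩
    · intro u
      by_cases hu : ∃ i, v i = u
      · simp only [dif_pos hu]; exact hc _
      · simp [dif_neg hu]
    · rw [Finset.sum_image (fun a _ b _ hab => hvinj hab)]
      refine Finset.sum_congr rfl fun i _ => ?_
      have hu : ∃ i', v i' = v i := ⟨i, rfl⟩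
      have : hu.choose = i := hvinj hu.choose_spec
      simp [dif_pos hu, this]

lemma mem_ratCone_singleton (u : Fin n → ℤ) (x : Fin n → ℝ) :
    x ∈ ratCone {u} ↔ ∃ c : ℝ, 0 ≤ c ∧ x = c • icast u := by
  constructor
  · rintro ⟨c, hc, rfl⟩
    exact ⟨c u, hc u, by rw [Finset.sum_singleton]⟩
  · rintro ⟨c, hc, rfl⟩
    exact ⟨fun _ => c, fun _ => hc, by rw [Finset.sum_singleton]⟩

lemma smooth_coords (hv : ∀ i, e (Pi.single (Fin.castLE h i) 1) = v i)
    (x : Fin n → ℤ) (c : Fin k → ℝ) (hc : ∀ i, 0 ≤ c i)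
    (hx : icast x = ∑ i, c i • icast (v i)) :
    ∃ a : Fin k → ℕ, (∀ i, (a i : ℝ) = c i) ∧ x = ∑ i, (a i : ℤ) • v i := by
  classical
  have hsymm : ∀ i, e.symm (v i) = Pi.single (Fin.castLE h i) 1 := fun i => by
    rw [← hv i, LinearEquiv.symm_apply_apply]
  have key := rext e.symm.toLinearMap x c v hx
  simp only [LinearEquiv.coe_coe] at key
  have hcoord : ∀ j, ((e.symm x) j : ℝ) =
      ∑ i, c i * (if j = Fin.castLE h i then 1 else 0) := by
    intro j
    have := congr_fun key j
    simpa [icast, Finset.sum_apply, hsymm, Pi.single_apply] using this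
  have hrange : ∀ i, ((e.symm x) (Fin.castLE h i) : ℝ) = c i := by
    intro i
    rw [hcoord]
    rw [Finset.sum_congr rfl (fun i' _ => by
      rw [show (if Fin.castLE h i = Fin.castLE h i' then (1:ℝ) else 0)
            = if i' = i then 1 else 0 by
        simp [Fin.castLE_inj, eq_comm]])]
    simp
  have hvanish : ∀ j, (¬ ∃ i, j = Fin.castLE h i) → (e.symm x) j = 0 := by
    intro j hj
    have h0 : ((e.symm x) j : ℝ) = 0 := by
      rw [hcoord]
      refine Finset.sum_eq_zero fun i _ => ?_
      rw [if_neg (fun hh => hj ⟨i, hh⟩), mul_zero]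
    exact_mod_cast h0
  have hnonneg : ∀ i, 0 ≤ (e.symm x) (Fin.castLE h i) := by
    intro i
    have h1 : (0:ℝ) ≤ ((e.symm x) (Fin.castLE h i) : ℝ) := (hrange i) ▸ hc i
    exact_mod_cast h1
  refine ⟨fun i => ((e.symm x) (Fin.castLE h i)).toNat, ?_, ?_⟩
  · intro i
    have h1 := hrange i
    rw [← Int.toNat_of_nonneg (hnonneg i)] at h1
    exact_mod_cast h1
  · have hb : e.symm x = ∑ i, ((e.symm x) (Fin.castLE h i)) • (Pi.single (Fin.castLE h i) 1 : Fin n → ℤ) := by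
      funext j
      by_cases hj : ∃ i, j = Fin.castLE h i
      · obtain ⟨i0, rfl⟩ := hj
        rw [Finset.sum_apply]
        rw [Finset.sum_congr rfl (fun i' _ => by
          rw [show ((e.symm x (Fin.castLE h i')) • (Pi.single (Fin.castLE h i') 1 : Fin n → ℤ)) (Fin.castLE h i0)
                = if i' = i0 then e.symm x (Fin.castLE h i') else 0 by
            simp [Pi.single_apply, Fin.castLE_inj, eq_comm]])]
        simp
      · rw [Finset.sum_apply, Finset.sum_eq_zero (fun i _ => by
          simp only [Pi.smul_apply, Pi.single_apply, smul_eq_mul]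
          rw [if_neg (fun hh => hj ⟨i, hh⟩), mul_zero]), hvanish j hj]
    have hx2 : x = ∑ i, ((e.symm x) (Fin.castLE h i)) • v i := by
      conv_lhs => rw [← e.apply_symm_apply x]
      conv_lhs => rw [hb]
      rw [map_sum]
      refine Finset.sum_congr rfl fun i _ => ?_
      rw [map_smul, hv i]
    conv_lhs => rw [hx2]
    refine Finset.sum_congr rfl fun i _ => ?_
    simp only [Int.toNat_of_nonneg (hnonneg i)]

end Smooth

section Smooth2
variable {n k : ℕ} (h : k ≤ n) (e : (Fin n → ℤ) ≃ₗ[ℤ] (Fin n → ℤ))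
  (v : Fin k → (Fin n → ℤ))

lemma coords_int (hv : ∀ i, e (Pi.single (Fin.castLE h i) 1) = v i) (b : Fin k → ℤ) (i0 : Fin k) :
    e.symm (∑ i, b i • v i) (Fin.castLE h i0) = b i0 := by
  have hsymm : ∀ i, e.symm (v i) = Pi.single (Fin.castLE h i) 1 := fun i => by
    rw [← hv i, LinearEquiv.symm_apply_apply]
  rw [map_sum]
  simp only [map_smul, hsymm]
  rw [Finset.sum_apply]
  rw [Finset.sum_congr rfl (fun i _ => show (b i • (Pi.single (Fin.castLE h i) 1 : Fin n → ℤ)) (Fin.castLE h i0)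
        = if i0 = i then b i else 0 from by
      simp [Pi.single_apply, Fin.castLE_inj])]
  simp

lemma monoid_inj (hv : ∀ i, e (Pi.single (Fin.castLE h i) 1) = v i) : Function.Injective (fun a : Fin k → ℕ => ∑ i, (a i : ℤ) • v i) := by
  intro a b hab
  funext i0
  have ha := coords_int h e v hv (fun i => (a i : ℤ)) i0
  have hb := coords_int h e v hv (fun i => (b i : ℤ)) i0
  simp only at hab ha hb
  rw [hab, hb] at ha
  exact_mod_cast ha.symm

lemma smooth_lattice (hv : ∀ i, e (Pi.single (Fin.castLE h i) 1) = v i) :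
    latticePts (ratCone (Finset.univ.image v))
      = Set.range (fun a : Fin k → ℕ => ∑ i, (a i : ℤ) • v i) := by
  ext x
  constructor
  · intro hx
    obtain ⟨c, hc, hxc⟩ := (mem_ratCone_image v (v_inj h e v hv) (icast x)).1 hx
    obtain ⟨a, _, hxa⟩ := smooth_coords h e v hv x c hc hxc
    exact ⟨a, hxa.symm⟩
  · rintro ⟨a, rfl⟩
    show icast (∑ i, ((a i : ℤ)) • v i) ∈ ratCone (Finset.univ.image v)
    refine (mem_ratCone_image v (v_inj h e v hv) _).2
      ⟨fun i => ((a i : ℤ) : ℝ), fun i => by positivity, ?_⟩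
    exact icast_sum_smul (fun i => (a i : ℤ)) v

lemma ray_lattice (hv : ∀ i, e (Pi.single (Fin.castLE h i) 1) = v i) (i0 : Fin k) (x : Fin n → ℤ) :
    x ∈ latticePts (ratCone {v i0}) ↔ ∃ a : ℕ, x = (a : ℤ) • v i0 := by
  constructor
  · intro hx
    obtain ⟨c, hc, hxc⟩ := (mem_ratCone_singleton (v i0) (icast x)).1 hx
    have hxc' : icast x = ∑ i, (if i = i0 then c else 0) • icast (v i) := by
      rw [hxc, Finset.sum_eq_single i0 (fun i _ hne => by rw [if_neg hne, zero_smul])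
        (fun habs => absurd (Finset.mem_univ i0) habs), if_pos rfl]
    obtain ⟨a, har, hxa⟩ := smooth_coords h e v hv x
      (fun i => if i = i0 then c else 0)
      (fun i => by by_cases hi : i = i0 <;> simp [hi, hc]) hxc'
    refine ⟨a i0, ?_⟩
    rw [hxa, Finset.sum_eq_single i0 (fun i _ hne => ?_)
      (fun habs => absurd (Finset.mem_univ i0) habs)]
    have := har i
    rw [if_neg hne] at this
    have : a i = 0 := by exact_mod_cast this
    rw [this]
    simp
  · rintro ⟨a, rfl⟩
    show icast ((a : ℤ) • v i0) ∈ ratCone {v i0}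
    refine (mem_ratCone_singleton (v i0) _).2 ⟨(a : ℝ), by positivity, ?_⟩
    funext j
    simp [icast]

lemma coordR (hv : ∀ i, e (Pi.single (Fin.castLE h i) 1) = v i) (x : Fin n → ℝ) (c : Fin k → ℝ) (hx : x = ∑ l, c l • icast (v l)) (i : Fin k) :
    (((matOf (e.symm.toLinearMap)).map (Int.cast : ℤ → ℝ)).mulVec x) (Fin.castLE h i) = c i := by
  have hsymm : ∀ l, e.symm (v l) = Pi.single (Fin.castLE h l) 1 := fun l => by
    rw [← hv l, LinearEquiv.symm_apply_apply]
  have hterm : ∀ l, ((matOf (e.symm.toLinearMap)).map (Int.cast : ℤ → ℝ)).mulVec (icast (v l))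
      = icast (Pi.single (Fin.castLE h l) 1) := by
    intro l
    rw [← mulVecR_eq, ← icast_mulVec, matOf_mulVec]
    simp only [LinearEquiv.coe_coe, hsymm]
  rw [hx, ← Matrix.mulVecLin_apply, map_sum]
  simp only [map_smul, Matrix.mulVecLin_apply, hterm]
  rw [Finset.sum_apply]
  rw [Finset.sum_congr rfl (fun l _ => show (c l • icast (Pi.single (Fin.castLE h l) 1)) (Fin.castLE h i)
        = if i = l then c l else 0 from by
      simp [icast, Pi.single_apply, Fin.castLE_inj])]
  simp

end Smooth2

section Face
variable {n k : ℕ} (h : k ≤ n) (e : (Fin n → ℤ) ≃ₗ[ℤ] (Fin n → ℤ))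
  (v : Fin k → (Fin n → ℤ))

lemma ray_subset (hv : ∀ i, e (Pi.single (Fin.castLE h i) 1) = v i) (i0 : Fin k) :
    ratCone {v i0} ⊆ ratCone (Finset.univ.image v) := by
  intro x hx
  obtain ⟨c, hc, rfl⟩ := (mem_ratCone_singleton (v i0) x).1 hx
  refine (mem_ratCone_image v (v_inj h e v hv) _).2
    ⟨fun i => if i = i0 then c else 0, fun i => by by_cases hi : i = i0 <;> simp [hi, hc], ?_⟩
  rw [Finset.sum_eq_single i0 (fun i _ hne => by simp [hne])
    (fun habs => absurd (Finset.mem_univ i0) habs)]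
  simp

lemma ray_is_face (hv : ∀ i, e (Pi.single (Fin.castLE h i) 1) = v i) (i0 : Fin k) :
    IsFaceOf (ratCone {v i0}) (ratCone (Finset.univ.image v)) := by
  classical
  set B := (matOf (e.symm.toLinearMap)).map (Int.cast : ℤ → ℝ) with hB
  refine ⟨fun j => ∑ i ∈ Finset.univ.filter (fun i => i ≠ i0), B (Fin.castLE h i) j, ?_, ?_⟩
  · intro x hx
    obtain ⟨c, hc, hxc⟩ := (mem_ratCone_image v (v_inj h e v hv) x).1 hx
    have hswap : ∑ j, (∑ i ∈ Finset.univ.filter (fun i => i ≠ i0), B (Fin.castLE h i) j) * x j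
        = ∑ i ∈ Finset.univ.filter (fun i => i ≠ i0), (B.mulVec x) (Fin.castLE h i) := by
      simp only [Finset.sum_mul]
      rw [Finset.sum_comm]
      simp [Matrix.mulVec, dotProduct]
    rw [hswap, Finset.sum_congr rfl (fun i _ => coordR h e v hv x c hxc i)]
    exact Finset.sum_nonneg fun i _ => hc i
  · ext x
    constructor
    · intro hx
      obtain ⟨c, hc, rfl⟩ := (mem_ratCone_singleton (v i0) x).1 hx
      have hmem : (c • icast (v i0)) ∈ ratCone (Finset.univ.image v) :=
        ray_subset h e v hv i0 hx
      refine ⟨hmem, ?_⟩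
      have hrep : c • icast (v i0) = ∑ i, (if i = i0 then c else 0) • icast (v i) := by
        rw [Finset.sum_eq_single i0 (fun i _ hne => by rw [if_neg hne, zero_smul])
          (fun habs => absurd (Finset.mem_univ i0) habs), if_pos rfl]
      have hswap : ∑ j, (∑ i ∈ Finset.univ.filter (fun i => i ≠ i0), B (Fin.castLE h i) j) * (c • icast (v i0)) j
          = ∑ i ∈ Finset.univ.filter (fun i => i ≠ i0), (B.mulVec (c • icast (v i0))) (Fin.castLE h i) := by
        simp only [Finset.sum_mul]
        rw [Finset.sum_comm]
        simp [Matrix.mulVec, dotProduct]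
      rw [hswap, Finset.sum_congr rfl (fun i _ => coordR h e v hv _ _ hrep i)]
      refine Finset.sum_eq_zero fun i hi => ?_
      rw [if_neg (Finset.mem_filter.1 hi).2]
    · rintro ⟨hx, hzero⟩
      obtain ⟨c, hc, hxc⟩ := (mem_ratCone_image v (v_inj h e v hv) x).1 hx
      have hswap : ∑ j, (∑ i ∈ Finset.univ.filter (fun i => i ≠ i0), B (Fin.castLE h i) j) * x j
          = ∑ i ∈ Finset.univ.filter (fun i => i ≠ i0), (B.mulVec x) (Fin.castLE h i) := by
        simp only [Finset.sum_mul]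
        rw [Finset.sum_comm]
        simp [Matrix.mulVec, dotProduct]
      rw [hswap, Finset.sum_congr rfl (fun i _ => coordR h e v hv x c hxc i)] at hzero
      have hzero' : ∀ i ∈ Finset.univ.filter (fun i => i ≠ i0), c i = 0 :=
        (Finset.sum_eq_zero_iff_of_nonneg (fun i _ => hc i)).1 hzero
      refine (mem_ratCone_singleton (v i0) x).2 ⟨c i0, hc i0, ?_⟩
      rw [hxc, Finset.sum_eq_single i0 (fun i _ hne => by
          rw [hzero' i (Finset.mem_filter.2 ⟨Finset.mem_univ i, hne⟩), zero_smul])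
        (fun habs => absurd (Finset.mem_univ i0) habs)]

end Face

lemma gen_mem {n k : ℕ} (h : k ≤ n) (e : (Fin n → ℤ) ≃ₗ[ℤ] (Fin n → ℤ))
    (v : Fin k → (Fin n → ℤ)) (hv : ∀ i, e (Pi.single (Fin.castLE h i) 1) = v i) (i0 : Fin k) :
    icast (v i0) ∈ ratCone (Finset.univ.image v) := by
  refine ray_subset h e v hv i0 ?_
  exact (mem_ratCone_singleton _ _).2 ⟨1, zero_le_one, (one_smul _ _).symm⟩

lemma key_step {m l : ℕ} (hl : l ≤ m) (eκ : (Fin m → ℤ) ≃ₗ[ℤ] (Fin m → ℤ))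
    (w : Fin l → (Fin m → ℤ)) (hw : ∀ j, eκ (Pi.single (Fin.castLE hl j) 1) = w j)
    (u : Fin m → ℝ) (κi : Set (Fin m → ℝ))
    (hu2 : κi = {x ∈ ratCone (Finset.univ.image w) | ∑ t, u t * x t = 0})
    (Avi : Fin m → ℤ) (hAvi : icast Avi ∈ κi)
    (hlatκi : ∀ y : Fin m → ℤ, icast y ∈ κi → ∃ a : ℕ, y = (a : ℤ) • Avi)
    (hu1 : ∀ x ∈ ratCone (Finset.univ.image w), 0 ≤ ∑ t, u t * x t) :
    Avi = 0 ∨ ∃ j, Avi = w j := by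
  classical
  by_cases h0 : Avi = 0
  · exact Or.inl h0
  right
  rw [hu2] at hAvi
  obtain ⟨hAκ, hz⟩ := hAvi
  have hmem : Avi ∈ latticePts (ratCone (Finset.univ.image w)) := hAκ
  rw [smooth_lattice hl eκ w hw] at hmem
  obtain ⟨b, hb⟩ := hmem
  simp only at hb
  have hexp : ∑ t, u t * (icast Avi) t
      = ∑ j, ((b j : ℤ) : ℝ) * (∑ t, u t * (icast (w j)) t) := by
    have hico : icast Avi = ∑ j, ((b j : ℤ) : ℝ) • icast (w j) := by
      rw [← hb]; exact icast_sum_smul (fun j => (b j : ℤ)) w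
    rw [hico]
    simp only [Finset.sum_apply, Pi.smul_apply, smul_eq_mul, Finset.mul_sum]
    rw [Finset.sum_comm]
    refine Finset.sum_congr rfl fun j _ => Finset.sum_congr rfl fun t _ => by ring
  have hterm0 : ∀ j, b j ≠ 0 → ∑ t, u t * (icast (w j)) t = 0 := by
    intro j hbj
    have hsum0 : ∑ j, ((b j : ℤ) : ℝ) * (∑ t, u t * (icast (w j)) t) = 0 := by
      rw [← hexp, hz]
    have h := (Finset.sum_eq_zero_iff_of_nonneg (fun j _ =>
      mul_nonneg (by positivity) (hu1 _ (gen_mem hl eκ w hw j)))).1 hsum0 j (Finset.mem_univ j)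
    rcases mul_eq_zero.1 h with h' | h'
    · exact absurd (by exact_mod_cast h' : b j = 0) hbj
    · exact h'
  have hwin : ∀ j, b j ≠ 0 → ∃ a : ℕ, w j = (a : ℤ) • Avi := by
    intro j hbj
    refine hlatκi (w j) ?_
    rw [hu2]
    exact ⟨gen_mem hl eκ w hw j, hterm0 j hbj⟩
  choose! cc hcc using hwin
  set S : ℤ := ∑ j ∈ Finset.univ.filter (fun j => b j ≠ 0), (b j : ℤ) * (cc j : ℤ) with hS
  have hfil : ∑ j ∈ Finset.univ.filter (fun j => b j ≠ 0), (b j : ℤ) • w j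
      = ∑ j, (b j : ℤ) • w j :=
    Finset.sum_filter_of_ne (fun j _ hfne hbj => hfne (by simp [hbj]))
  have hAvi2 : Avi = S • Avi := by
    conv_lhs => rw [← hb]
    rw [← hfil]
    rw [Finset.sum_congr rfl (fun j hj => by
      rw [hcc j (Finset.mem_filter.1 hj).2, smul_smul])]
    rw [hS, Finset.sum_smul]
  obtain ⟨t, ht⟩ := Function.ne_iff.1 h0
  have htt : Avi t ≠ 0 := ht
  have hS1 : S = 1 := by
    have h1 : S * Avi t = 1 * Avi t := by
      rw [one_mul]
      have := congr_fun hAvi2 t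
      simpa [Pi.smul_apply, smul_eq_mul] using this.symm
    exact mul_right_cancel₀ htt h1
  have hex : ∃ j0 ∈ Finset.univ.filter (fun j => b j ≠ 0), (b j0 : ℤ) * (cc j0 : ℤ) ≠ 0 := by
    by_contra hno
    push_neg at hno
    have : S = 0 := Finset.sum_eq_zero hno
    omega
  obtain ⟨j0, hj0f, hj0⟩ := hex
  have hle : (b j0 : ℤ) * (cc j0 : ℤ) ≤ S := by
    rw [hS]
    exact Finset.single_le_sum (f := fun j => (b j : ℤ) * (cc j : ℤ))
      (fun j _ => by positivity) hj0f
  have hnn : (0:ℤ) ≤ (b j0 : ℤ) * (cc j0 : ℤ) := by positivity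
  have h1 : (b j0 : ℤ) * (cc j0 : ℤ) = 1 := by omega
  rcases Int.mul_eq_one_iff_eq_one_or_neg_one.1 h1 with ⟨_, hc1⟩ | ⟨_, hc1⟩
  · refine ⟨j0, ?_⟩
    rw [hcc j0 (Finset.mem_filter.1 hj0f).2, hc1, one_smul]
  · exfalso
    have : (0:ℤ) ≤ (cc j0 : ℤ) := Int.natCast_nonneg _
    omega

/-- Let `p : (F, N) → (G, Q)` be a weakly semistable morphism
of fans all of whose cones are smooth.  Then for every `σ ∈ F` mapping onto
`κ ∈ G`, the projection of monoids `N ∩ σ → Q ∩ κ` is, after choosing suitable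
bases, isomorphic to a partial-sums projection `ℕ^d → ℕ^e`,
`(x_1,…,x_d) ↦ (x_1+⋯+x_{i_1}, …)` (some coordinates possibly being dropped);
i.e. the morphism of toric varieties is semistable. -/
theorem weakly_semistable_smooth_is_semistable {m n : ℕ}
    (A : Matrix (Fin m) (Fin n) ℤ)
    (F : Set (Set (Fin n → ℝ))) (G : Set (Set (Fin m → ℝ)))
    (hF : IsFan F) (hG : IsFan G)
    (hFsm : ∀ σ ∈ F, IsSmoothCone σ) (hGsm : ∀ κ ∈ G, IsSmoothCone κ)
    (hws1 : ∀ σ ∈ F, ∃ κ ∈ G, mulVecR A '' σ = κ)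
    (hws2 : ∀ σ ∈ F, ∀ κ ∈ G, mulVecR A '' σ = κ →
      Matrix.mulVec A '' latticePts σ = latticePts κ) :
    ∀ σ ∈ F, ∀ κ ∈ G, mulVecR A '' σ = κ →
      ∃ (d e : ℕ) (φ : (Fin d → ℕ) →+ (Fin n → ℤ)) (ψ : (Fin e → ℕ) →+ (Fin m → ℤ))
        (g : Fin d → Option (Fin e)),
        Function.Injective φ ∧ Set.range φ = latticePts σ ∧
        Function.Injective ψ ∧ Set.range ψ = latticePts κ ∧
        ∀ x : Fin d → ℕ,
          Matrix.mulVec A (φ x) =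
            ψ (fun j => ∑ i ∈ Finset.univ.filter (fun i => g i = some j), x i) := by

  intro σ hσ κ hκ hσκ
  classical
  obtain ⟨k, hk, v, eσ, hvσ, hσeq⟩ := hFsm σ hσ
  obtain ⟨l, hl, w, eκ, hwκ, hκeq⟩ := hGsm κ hκ
  have hkey : ∀ i : Fin k, A.mulVec (v i) = 0 ∨ ∃ j, A.mulVec (v i) = w j := by
    intro i
    have hface : IsFaceOf (ratCone {v i}) σ := by
      rw [hσeq]; exact ray_is_face hk eσ v hvσ i
    have hρF : ratCone {v i} ∈ F := hF.2.2.1 σ hσ _ hface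
    obtain ⟨κi, hκiG, hκi⟩ := hws1 _ hρF
    have hρsub : ratCone {v i} ⊆ σ := by
      rw [hσeq]; exact ray_subset hk eσ v hvσ i
    have hκisub : κi ⊆ κ := by
      rw [← hκi, ← hσκ]
      exact Set.image_mono hρsub
    have hlat := hws2 _ hρF κi hκiG hκi
    have hlatκi : ∀ y : Fin m → ℤ, icast y ∈ κi → ∃ a : ℕ, y = (a : ℤ) • A.mulVec (v i) := by
      intro y hy
      have hy' : y ∈ latticePts κi := hy
      rw [← hlat] at hy'
      obtain ⟨z, hz, rfl⟩ := hy'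
      obtain ⟨a, rfl⟩ := (ray_lattice hk eσ v hvσ i z).1 hz
      refine ⟨a, ?_⟩
      rw [← Matrix.mulVecLin_apply, map_smul, Matrix.mulVecLin_apply]
    have hAviκi : icast (A.mulVec (v i)) ∈ κi := by
      rw [← hκi]
      exact ⟨icast (v i), (mem_ratCone_singleton _ _).2 ⟨1, zero_le_one, (one_smul _ _).symm⟩,
        (icast_mulVec A (v i)).symm⟩
    have hfaceκ : IsFaceOf κi κ := by
      have hh := hG.2.2.2 κ hκ κi hκiG
      rwa [Set.inter_eq_right.2 hκisub] at hh
    obtain ⟨u, hu1, hu2⟩ := hfaceκ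
    have hu1' : ∀ x ∈ ratCone (Finset.univ.image w), 0 ≤ ∑ t, u t * x t := by
      rw [← hκeq]; exact hu1
    have hu2' : κi = {x ∈ ratCone (Finset.univ.image w) | ∑ t, u t * x t = 0} := by
      rw [← hκeq]; exact hu2
    exact key_step hl eκ w hwκ u κi hu2' (A.mulVec (v i)) hAviκi hlatκi hu1'
  set g : Fin k → Option (Fin l) := fun i =>
    if hi : ∃ j, A.mulVec (v i) = w j then some hi.choose else none with hg
  have hg_some : ∀ i j, g i = some j → A.mulVec (v i) = w j := by
    intro i j hij
    simp only [hg] at hij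
    by_cases hi : ∃ j, A.mulVec (v i) = w j
    · rw [dif_pos hi] at hij
      obtain rfl : hi.choose = j := Option.some.inj hij
      exact hi.choose_spec
    · rw [dif_neg hi] at hij
      exact absurd hij (by simp)
  have hg_none : ∀ i, g i = none → A.mulVec (v i) = 0 := by
    intro i hi
    rcases hkey i with h0 | hj
    · exact h0
    · exfalso
      simp only [hg] at hi
      rw [dif_pos hj] at hi
      exact absurd hi (by simp)
  refine ⟨k, l,
    { toFun := fun a => ∑ i, (a i : ℤ) • v i
      map_zero' := by simp
      map_add' := by
        intro a b
        simp only [Pi.add_apply, Nat.cast_add, add_smul]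
        rw [Finset.sum_add_distrib] },
    { toFun := fun b => ∑ j, (b j : ℤ) • w j
      map_zero' := by simp
      map_add' := by
        intro a b
        simp only [Pi.add_apply, Nat.cast_add, add_smul]
        rw [Finset.sum_add_distrib] },
    g, ?_, ?_, ?_, ?_, ?_⟩
  · exact monoid_inj hk eσ v hvσ
  · rw [hσeq, smooth_lattice hk eσ v hvσ]
    rfl
  · exact monoid_inj hl eκ w hwκ
  · rw [hκeq, smooth_lattice hl eκ w hwκ]
    rfl
  · intro x
    show A.mulVec (∑ i, (x i : ℤ) • v i)
        = ∑ j, ((∑ i ∈ Finset.univ.filter (fun i => g i = some j), x i : ℕ) : ℤ) • w j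
    have hAφ : A.mulVec (∑ i, (x i : ℤ) • v i) = ∑ i, (x i : ℤ) • A.mulVec (v i) := by
      rw [← Matrix.mulVecLin_apply, map_sum]
      simp only [map_smul, Matrix.mulVecLin_apply]
    rw [hAφ]
    have hfib := Finset.sum_fiberwise Finset.univ g (fun i => (x i : ℤ) • A.mulVec (v i))
    rw [← hfib, Fintype.sum_option]
    rw [show (∑ i ∈ Finset.univ.filter (fun i => g i = none), (x i : ℤ) • A.mulVec (v i)) = 0 from
      Finset.sum_eq_zero fun i hi => by rw [hg_none i (Finset.mem_filter.1 hi).2, smul_zero]]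
    rw [zero_add]
    refine Finset.sum_congr rfl fun j _ => ?_
    rw [Finset.sum_congr rfl (fun i hi => by rw [hg_some i j (Finset.mem_filter.1 hi).2]),
      ← Finset.sum_smul]
    congr 1
    push_cast
    rfl
end
end
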